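/- arXiv:2206.05084 — 10 statements merged into one kernel-verified Lean document; each statement's English description precedes it below -/
import Mathlib

section
/- Let π: X → Y be a surjective continuous map between two compact metrizable spaces and let π̃: M(X) → M(Y) be the induced map (pushforward of measures). Then π is open if and only if π̃ is open. -/
open MeasureTheory Topology Filter Set
open scoped ENNReal NNReal

/-- The pushforward map `M(X) → M(Y)` induced by a measurable map `f : X → Y`,
`(pushPM f hf μ)(B) = μ(f⁻¹ B)`. -/
noncomputable def pushPM {X Y : Type*} [MeasurableSpace X] [MeasurableSpace Y]
    (f : X → Y) (hf : Measurable f) (μ : ProbabilityMeasure X) : ProbabilityMeasure Y :=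
  ⟨μ.toMeasure.map f, Measure.isProbabilityMeasure_map hf.aemeasurable⟩

/-!
If `π̃` is open, then `π '' U` is the set of points whose Dirac mass lies in the open set
`π̃ {μ | 0 < μ U}`, hence open.

Conversely, an open map between compact metric spaces is uniformly open: points `δ`-close to
`π x` have preimages `ε`-close to `x`. Cut `Y` into small pieces `B j` with `π̃ μ`-null frontiers,
so that `μ (π ⁻¹' B j) ≤ ν' (B j) + η` for all `ν'` near `π̃ μ`, and cut `X` into small pieces
`C i`. Split `ν'` restricted to `B j` in the proportions `μ (C i ∩ π ⁻¹' B j)` and lift each share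
to a measure living near `C i ∩ π ⁻¹' B j`; the sum of the lifts is a preimage of `ν'` that is
Lévy–Prokhorov close to `μ`. A finite measure carried by `π '' K`, `K` compact, is lifted to one
carried by `K` as a weak limit of its pushforwards along approximate measurable sections, using
the compactness of the set of measures carried by `K`.
-/

open Metric
open scoped Function

theorem IsOpenMap.exists_pos_forall_dist_lt {X Y : Type*} [PseudoMetricSpace X] [CompactSpace X]
    [PseudoMetricSpace Y] {π : X → Y} (hπ : IsOpenMap π) (hπc : Continuous π) {ε : ℝ}
    (hε : 0 < ε) : ∃ δ > 0, ∀ x y, dist (π x) y < δ → ∃ x', π x' = y ∧ dist x x' < ε := by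
  -- the pairs `(x, y)` such that `y` has a preimage `ε`-close to `x`, as a union of open boxes
  set good : Set (X × Y) := ⋃ x₀, ⋃ s ∈ Ioo 0 ε, ball x₀ s ×ˢ (π '' ball x₀ (ε - s))
  have hgood : IsOpen good :=
    isOpen_iUnion fun _ => isOpen_biUnion fun _ _ => isOpen_ball.prod (hπ _ isOpen_ball)
  have hgraph : range (fun x => (x, π x)) ⊆ good := by
    rintro _ ⟨x, rfl⟩
    have hs : ε / 2 ∈ Ioo 0 ε := ⟨half_pos hε, half_lt_self hε⟩
    refine mem_iUnion_of_mem x (mem_iUnion₂_of_mem hs ?_)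
    exact ⟨mem_ball_self (half_pos hε), x, mem_ball_self (by linarith), rfl⟩
  obtain ⟨δ, hδ, hsub⟩ :=
    (isCompact_range (continuous_id.prodMk hπc)).exists_thickening_subset_open hgood hgraph
  refine ⟨δ, hδ, fun x y hxy => ?_⟩
  have hxy' : (x, y) ∈ good := hsub <| mem_thickening_iff.2
    ⟨(x, π x), mem_range_self x, by simpa [Prod.dist_eq, dist_comm] using hxy⟩
  simp only [good, mem_iUnion, mem_prod, mem_ball, mem_image] at hxy'
  obtain ⟨x₀, s, -, hx, x', hx', rfl⟩ := hxy'
  exact ⟨x', rfl, (dist_triangle_right x x' x₀).trans_lt (by linarith)⟩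

theorem frontier_diff_subset {W : Type*} [TopologicalSpace W] (s t : Set W) :
    frontier (s \ t) ⊆ frontier s ∪ frontier t := by
  rw [sdiff_eq, ← frontier_compl t]
  exact (frontier_inter_subset s tᶜ).trans
    (union_subset_union inter_subset_left inter_subset_right)

theorem exists_finite_partition_diam_le_measure_frontier_eq_zero {W : Type*} [MetricSpace W]
    [CompactSpace W] [MeasurableSpace W] [OpensMeasurableSpace W] (ρ : Measure W)
    [IsFiniteMeasure ρ] {δ : ℝ} (hδ : 0 < δ) :
    ∃ (k : ℕ) (B : Fin k → Set W), (∀ j, MeasurableSet (B j)) ∧ Pairwise (Disjoint on B) ∧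
      ⋃ j, B j = univ ∧ (∀ j, diam (B j) ≤ δ) ∧ ∀ j, ρ (frontier (B j)) = 0 := by
  have hr : ∀ w : W, ∃ r ∈ Ioo 0 (δ / 2), ρ (frontier (ball w r)) = 0 := fun w => by
    simpa only [thickening_singleton] using exists_null_frontier_thickening ρ {w} (half_pos hδ)
  choose r hr hρr using hr
  obtain ⟨t, ht⟩ := isCompact_univ.elim_finite_subcover (fun w => ball w (r w))
    (fun _ => isOpen_ball) fun w _ => mem_iUnion.2 ⟨w, mem_ball_self (hr w).1⟩
  let c : Fin t.card → W := fun j => t.equivFin.symm j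
  let b : Fin t.card → Set W := fun j => ball (c j) (r (c j))
  have hb : ⋃ j, b j = univ := by
    refine eq_univ_of_forall fun x => ?_
    obtain ⟨w, hw, hx⟩ := mem_iUnion₂.1 (ht (mem_univ x))
    exact mem_iUnion.2 ⟨t.equivFin ⟨w, hw⟩, by simpa [b, c] using hx⟩
  refine ⟨t.card, disjointed b, fun j => ?_, disjoint_disjointed b, iUnion_disjointed.trans hb,
    fun j => ?_, fun j => ?_⟩
  · exact disjointedRec (fun s i hs => hs.diff measurableSet_ball) measurableSet_ball
  · refine (diam_mono (disjointed_subset b j) isBounded_ball).trans ?_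
    have := (hr (c j)).2
    exact (diam_ball (hr (c j)).1.le).trans (by linarith)
  · exact disjointedRec (p := fun s => ρ (frontier s) = 0)
      (fun s i hs => measure_mono_null (frontier_diff_subset s (b i))
        (measure_union_null hs (hρr _))) (hρr _)

theorem MeasureTheory.Measure.sum_restrict_of_partition {α ι : Type*} [MeasurableSpace α]
    [Fintype ι] (μ : Measure α) {C : ι → Set α} (hm : ∀ i, MeasurableSet (C i))
    (hd : Pairwise (Disjoint on C)) (hu : ⋃ i, C i = univ) : ∑ i, μ.restrict (C i) = μ := by
  rw [← Measure.sum_fintype, ← Measure.restrict_iUnion hd hm, hu, Measure.restrict_univ]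

theorem MeasureTheory.FiniteMeasure.tendsto_map_of_ae_tendsto {Ω Y : Type*} [MeasurableSpace Ω]
    [TopologicalSpace Y] [MeasurableSpace Y] [OpensMeasurableSpace Y] (μ : FiniteMeasure Ω)
    {g : ℕ → Ω → Y} (hg : ∀ n, Measurable (g n)) {f : Ω → Y} (hf : Measurable f)
    (hlim : ∀ᵐ x ∂(μ : Measure Ω), Tendsto (fun n => g n x) atTop (𝓝 (f x))) :
    Tendsto (fun n => μ.map (g n)) atTop (𝓝 (μ.map f)) := by
  rw [FiniteMeasure.tendsto_iff_forall_integral_tendsto]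
  intro φ
  simp only [FiniteMeasure.toMeasure_map]
  rw [integral_map hf.aemeasurable φ.continuous.aestronglyMeasurable]
  simp_rw [integral_map (hg _).aemeasurable φ.continuous.aestronglyMeasurable]
  refine tendsto_integral_of_dominated_convergence (fun _ => ‖φ‖)
    (fun n => (φ.continuous.measurable.comp (hg n)).aestronglyMeasurable) (integrable_const _)
    (fun n => ae_of_all _ fun x => φ.norm_coe_le_norm _) ?_
  filter_upwards [hlim] with x hx using (φ.continuous.tendsto _).comp hx

theorem exists_map_eq_of_measure_compl_image_eq_zero {X Y : Type*} [MetricSpace X]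
    [MeasurableSpace X] [BorelSpace X] [MetricSpace Y] [MeasurableSpace Y] [BorelSpace Y]
    {π : X → Y} (hπ : Continuous π) {K : Set X} (hK : IsCompact K) (ρ : Measure Y)
    [IsFiniteMeasure ρ] (hρ : ρ (π '' K)ᶜ = 0) : ∃ θ : Measure X, θ.map π = ρ ∧ θ Kᶜ = 0 := by
  rcases K.eq_empty_or_nonempty with rfl | hKne
  · refine ⟨0, ?_, rfl⟩
    rw [image_empty, compl_empty, Measure.measure_univ_eq_zero] at hρ
    rw [hρ, Measure.map_zero]
  have := hK.isSeparable.separableSpace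
  have := hKne.to_subtype
  let d : ℕ → X := fun n => TopologicalSpace.denseSeq K n
  let e : ℕ → Y := π ∘ d
  let q : ℕ → Y → X := fun N => d ∘ SimpleFunc.nearestPtInd e N
  have hq : ∀ N, Measurable (q N) := fun N => measurable_from_nat.comp (SimpleFunc.measurable _)
  have hπq : ∀ y ∈ π '' K, Tendsto (fun N => π (q N y)) atTop (𝓝 y) := by
    have hK : π '' K ⊆ closure (range e) := by
      have := image_closure_subset_closure_image (f := π ∘ Subtype.val)
        (s := range (TopologicalSpace.denseSeq K)) (hπ.comp continuous_subtype_val)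
      rwa [(TopologicalSpace.denseRange_denseSeq K).closure_range, image_univ, range_comp,
        Subtype.range_coe, ← range_comp] at this
    exact fun y hy => SimpleFunc.tendsto_nearestPt (hK hy)
  let ρF : FiniteMeasure Y := ⟨ρ, inferInstance⟩
  have hT : IsClosed ((fun θ : FiniteMeasure X => θ.map π) ''
      {θ | θ.mass ≤ ρF.mass ∧ θ Kᶜ = 0}) :=
    ((isCompact_setOfPred_finiteMeasure_le_of_isCompact _ hK).image
      (FiniteMeasure.continuous_map hπ)).isClosed
  have hmem : ∀ N, ρF.map (q N) ∈ {θ : FiniteMeasure X | θ.mass ≤ ρF.mass ∧ θ Kᶜ = 0} := by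
    refine fun N => ⟨FiniteMeasure.mass_map_le _ _, ?_⟩
    rw [← ENNReal.coe_eq_zero, FiniteMeasure.ennreal_coeFn_eq_coeFn_toMeasure,
      FiniteMeasure.toMeasure_map, Measure.map_apply (hq N) hK.isClosed.measurableSet.compl]
    have : q N ⁻¹' Kᶜ = ∅ :=
      eq_empty_of_forall_notMem fun y hy => hy (TopologicalSpace.denseSeq K _).2
    rw [this, measure_empty]
  have hlim : Tendsto (fun N => (ρF.map (q N)).map π) atTop (𝓝 ρF) := by
    convert FiniteMeasure.tendsto_map_of_ae_tendsto ρF (fun N => hπ.measurable.comp (hq N))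
      measurable_id ((ae_iff.2 hρ).mono hπq) using 2 with N
    · exact Subtype.ext (Measure.map_map hπ.measurable (hq N))
    · exact Subtype.ext Measure.map_id.symm
  obtain ⟨θ, ⟨-, hθK⟩, hθ⟩ :=
    hT.mem_of_tendsto hlim (Eventually.of_forall fun N => mem_image_of_mem _ (hmem N))
  refine ⟨θ, (FiniteMeasure.toMeasure_map θ π).symm.trans (congrArg _ hθ), ?_⟩
  rwa [← FiniteMeasure.ennreal_coeFn_eq_coeFn_toMeasure, ENNReal.coe_eq_zero]

theorem cthickening_subset_thickening_of_diam_le {X : Type*} [PseudoMetricSpace X] {ε : ℝ}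
    (hε : 0 < ε) {D S : Set X} (hDb : Bornology.IsBounded D) (hD : diam D ≤ ε)
    (hSD : (S ∩ D).Nonempty) : cthickening ε D ⊆ thickening (3 * ε) S := by
  obtain ⟨a, haS, haD⟩ := hSD
  have hDS : D ⊆ cthickening ε S := fun x hx =>
    mem_cthickening_of_dist_le x a ε S haS ((dist_le_diam_of_mem hDb hx haD).trans hD)
  calc cthickening ε D ⊆ cthickening ε (cthickening ε S) := cthickening_subset_of_subset ε hDS
    _ ⊆ cthickening (ε + ε) S := cthickening_cthickening_subset hε.le hε.le S
    _ ⊆ thickening (3 * ε) S := cthickening_subset_thickening' (by positivity) (by linarith) S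

theorem measure_inter_le_measure_thickening_add {X : Type*} [PseudoMetricSpace X]
    [MeasurableSpace X] {μ θ : Measure X} {ε : ℝ} (hε : 0 < ε) {D : Set X}
    (hDb : Bornology.IsBounded D) (hD : diam D ≤ ε) (hθ : θ (cthickening ε D)ᶜ = 0)
    {e : ℝ≥0∞} (hμθ : μ D ≤ θ univ + e) (S : Set X) :
    μ (S ∩ D) ≤ θ (thickening (3 * ε) S) + e := by
  rcases (S ∩ D).eq_empty_or_nonempty with hSD | hSD
  · simp [hSD]
  have hsub := cthickening_subset_thickening_of_diam_le hε hDb hD hSD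
  calc μ (S ∩ D) ≤ μ D := measure_mono inter_subset_right
    _ ≤ θ univ + e := hμθ
    _ ≤ θ (thickening (3 * ε) S) + e := by
      refine add_le_add_left ?_ e
      calc θ univ ≤ θ (thickening (3 * ε) S) + θ (thickening (3 * ε) S)ᶜ :=
            measure_univ_le_add_compl _
        _ = θ (thickening (3 * ε) S) := by
          rw [measure_mono_null (compl_subset_compl.2 hsub) hθ, add_zero]

section OpenMap

variable {X Y : Type*} [MetricSpace X] [CompactSpace X] [MeasurableSpace X] [BorelSpace X]
  [MetricSpace Y] [CompactSpace Y] [MeasurableSpace Y] [BorelSpace Y] {π : X → Y}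
  {ι : Type*} [Fintype ι] {C : ι → Set X} {ε δ : ℝ}

theorem exists_map_eq_measure_compl_cthickening_eq_zero (hπc : Continuous π)
    (hδ : ∀ x y, dist (π x) y < δ → ∃ x', π x' = y ∧ dist x x' < ε) {B : Set Y}
    (hBdiam : diam B < δ) {D : Set X} (hDB : D ⊆ π ⁻¹' B) (hD : D.Nonempty) (ρ : Measure Y)
    [IsFiniteMeasure ρ] (hρ : ρ Bᶜ = 0) :
    ∃ θ : Measure X, θ.map π = ρ ∧ θ (cthickening ε D)ᶜ = 0 := by
  obtain ⟨x, hx⟩ := hD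
  have hxB : π x ∈ B := hDB hx
  have hB : B ⊆ π '' cthickening ε D := fun y hy => by
    obtain ⟨x', rfl, hxx'⟩ :=
      hδ x y ((dist_le_diam_of_mem isBounded_of_compactSpace hxB hy).trans_lt hBdiam)
    exact ⟨x', mem_cthickening_of_dist_le x' x ε D hx (dist_comm x x' ▸ hxx'.le), rfl⟩
  exact exists_map_eq_of_measure_compl_image_eq_zero hπc isClosed_cthickening.isCompact ρ
    (measure_mono_null (compl_subset_compl.2 hB) hρ)

theorem exists_map_eq_restrict_forall_measure_restrict_le (hπc : Continuous π)
    (hπs : Function.Surjective π) (hε : 0 < ε)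
    (hδ : ∀ x y, dist (π x) y < δ → ∃ x', π x' = y ∧ dist x x' < ε)
    (hCm : ∀ i, MeasurableSet (C i)) (hCd : Pairwise (Disjoint on C)) (hCu : ⋃ i, C i = univ)
    (hCdiam : ∀ i, diam (C i) ≤ ε) (μ : Measure X) [IsFiniteMeasure μ] (ν : Measure Y)
    [IsFiniteMeasure ν] {B : Set Y} (hBm : MeasurableSet B) (hBdiam : diam B < δ) {η : ℝ≥0∞}
    (hη : μ (π ⁻¹' B) ≤ ν B + η) :
    ∃ θ : Measure X, θ.map π = ν.restrict B ∧
      ∀ S, μ.restrict (π ⁻¹' B) S ≤ θ (thickening (3 * ε) S) + η := by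
  set A := π ⁻¹' B
  have hAm : MeasurableSet A := hBm.preimage hπc.measurable
  by_cases hA : μ A = 0
  · obtain ⟨θ, hθ, -⟩ := exists_map_eq_of_measure_compl_image_eq_zero hπc isCompact_univ
      (ν.restrict B) (by simp [hπs.range_eq])
    refine ⟨θ, hθ, fun S => ?_⟩
    calc μ.restrict A S ≤ μ.restrict A univ := measure_mono (subset_univ S)
      _ = 0 := by rw [Measure.restrict_apply_univ, hA]
      _ ≤ _ := zero_le
  have hsum : ∀ T, ∑ i, μ (T ∩ C i) = μ T := fun T => by
    conv_rhs => rw [← Measure.sum_restrict_of_partition μ hCm hCd hCu]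
    simp [Measure.restrict_apply' (hCm _)]
  let w : ι → ℝ≥0∞ := fun i => μ (C i ∩ A) / μ A
  have hw : ∑ i, w i = 1 := by
    simp only [w, div_eq_mul_inv, ← Finset.sum_mul]
    simp_rw [inter_comm (C _) A]
    rw [hsum, ENNReal.mul_inv_cancel hA (measure_ne_top μ A)]
  have hlift : ∀ i, ∃ θ : Measure X,
      θ.map π = w i • ν.restrict B ∧ θ (cthickening ε (C i ∩ A))ᶜ = 0 := by
    intro i
    rcases (C i ∩ A).eq_empty_or_nonempty with hD | hD
    · exact ⟨0, by simp [w, hD], rfl⟩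
    obtain ⟨θ, hθmap, hθ⟩ := exists_map_eq_measure_compl_cthickening_eq_zero hπc hδ hBdiam
      inter_subset_right hD (ν.restrict B) (by simp [Measure.restrict_apply hBm.compl])
    exact ⟨w i • θ, by rw [Measure.map_smul, hθmap], by rw [Measure.smul_apply, hθ, smul_zero]⟩
  choose θ hθmap hθ using hlift
  refine ⟨∑ i, θ i, ?_, fun S => ?_⟩
  · rw [Measure.map_finset_sum' hπc.measurable.aemeasurable,
      Finset.sum_congr rfl fun i _ => hθmap i, ← Finset.sum_smul, hw, one_smul]
  have hθuniv : ∀ i, θ i univ = w i * ν B := fun i => by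
    simpa [Measure.map_apply hπc.measurable MeasurableSet.univ] using
      congrArg (· univ) (hθmap i)
  have hdiam : ∀ i, diam (C i ∩ A) ≤ ε := fun i =>
    (diam_mono inter_subset_left isBounded_of_compactSpace).trans (hCdiam i)
  calc μ.restrict A S = ∑ i, μ (S ∩ (C i ∩ A)) := by
        rw [Measure.restrict_apply' hAm, ← hsum]
        simp_rw [inter_assoc, inter_comm A]
    _ ≤ ∑ i, (θ i (thickening (3 * ε) S) + w i * η) := by
        refine Finset.sum_le_sum fun i _ => measure_inter_le_measure_thickening_add hε
          isBounded_of_compactSpace (hdiam i) (hθ i) ?_ S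
        calc μ (C i ∩ A) = w i * μ A := (ENNReal.div_mul_cancel hA (measure_ne_top μ A)).symm
          _ ≤ w i * (ν B + η) := by gcongr
          _ = θ i univ + w i * η := by rw [mul_add, hθuniv]
    _ = (∑ i, θ i) (thickening (3 * ε) S) + η := by
        rw [Finset.sum_add_distrib, ← Finset.sum_mul, hw, one_mul, Measure.finsetSum_apply]

theorem exists_map_eq_forall_measure_le_thickening_add (hπc : Continuous π)
    (hπs : Function.Surjective π) (hε : 0 < ε)
    (hδ : ∀ x y, dist (π x) y < δ → ∃ x', π x' = y ∧ dist x x' < ε)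
    (hCm : ∀ i, MeasurableSet (C i)) (hCd : Pairwise (Disjoint on C)) (hCu : ⋃ i, C i = univ)
    (hCdiam : ∀ i, diam (C i) ≤ ε) {κ : Type*} [Fintype κ] {B : κ → Set Y}
    (hBm : ∀ j, MeasurableSet (B j)) (hBd : Pairwise (Disjoint on B)) (hBu : ⋃ j, B j = univ)
    (hBdiam : ∀ j, diam (B j) < δ) (μ : Measure X) [IsFiniteMeasure μ] (ν : Measure Y)
    [IsFiniteMeasure ν] {η : ℝ≥0∞} (hη : ∀ j, μ (π ⁻¹' B j) ≤ ν (B j) + η) :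
    ∃ μ' : Measure X, μ'.map π = ν ∧
      ∀ S, μ S ≤ μ' (thickening (3 * ε) S) + Fintype.card κ * η := by
  choose θ hθmap hθ using fun j => exists_map_eq_restrict_forall_measure_restrict_le hπc hπs hε
    hδ hCm hCd hCu hCdiam μ ν (hBm j) (hBdiam j) (hη j)
  refine ⟨∑ j, θ j, ?_, fun S => ?_⟩
  · rw [Measure.map_finset_sum' hπc.measurable.aemeasurable,
      Finset.sum_congr rfl fun j _ => hθmap j, Measure.sum_restrict_of_partition ν hBm hBd hBu]
  have hA := Measure.sum_restrict_of_partition μ (fun j => (hBm j).preimage hπc.measurable)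
    (fun i j h => (hBd h).preimage π) (by rw [← preimage_iUnion, hBu, preimage_univ])
  calc μ S = ∑ j, μ.restrict (π ⁻¹' B j) S := by rw [← Measure.finsetSum_apply, hA]
    _ ≤ ∑ j, (θ j (thickening (3 * ε) S) + η) := Finset.sum_le_sum fun j _ => hθ j S
    _ = (∑ j, θ j) (thickening (3 * ε) S) + Fintype.card κ * η := by
      rw [Finset.sum_add_distrib, Finset.sum_const, Finset.card_univ, nsmul_eq_mul,
        Measure.finsetSum_apply]

theorem eventually_exists_pushPM_eq_levyProkhorovEDist_le (hπc : Continuous π)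
    (hπs : Function.Surjective π) (hπ : IsOpenMap π) (μ : ProbabilityMeasure X) {ε : ℝ}
    (hε : 0 < ε) :
    ∀ᶠ ν in 𝓝 (pushPM π hπc.measurable μ), ∃ μ', pushPM π hπc.measurable μ' = ν ∧
      levyProkhorovEDist (μ : Measure X) μ' ≤ ENNReal.ofReal ε := by
  obtain ⟨δ, hδ, hπδ⟩ := hπ.exists_pos_forall_dist_lt hπc (by positivity : 0 < ε / 3)
  set ν := pushPM π hπc.measurable μ
  obtain ⟨k, B, hBm, hBd, hBu, hBdiam, hBν⟩ :=
    exists_finite_partition_diam_le_measure_frontier_eq_zero (ν : Measure Y) (half_pos hδ)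
  obtain ⟨m, C, hCm, hCd, hCu, hCdiam, -⟩ :=
    exists_finite_partition_diam_le_measure_frontier_eq_zero (μ : Measure X)
      (by positivity : 0 < ε / 3)
  set η : ℝ≥0∞ := ENNReal.ofReal ε / k
  have hη : 0 < η := ENNReal.div_pos (by simpa using hε) (ENNReal.natCast_ne_top k)
  filter_upwards [eventually_all.2 fun j : Fin k =>
    ν.toMeasure_add_pos_gt_mem_nhds (G := interior (B j)) isOpen_interior hη] with ν' hν'
  have hle : ∀ j, (μ : Measure X) (π ⁻¹' B j) ≤ (ν' : Measure Y) (B j) + η := fun j => by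
    calc (μ : Measure X) (π ⁻¹' B j) = (ν : Measure Y) (B j) :=
          (Measure.map_apply hπc.measurable (hBm j)).symm
      _ = (ν : Measure Y) (interior (B j)) := (measure_interior_of_null_frontier (hBν j)).symm
      _ ≤ (ν' : Measure Y) (interior (B j)) + η := (hν' j).le
      _ ≤ (ν' : Measure Y) (B j) + η := by gcongr; exact interior_subset
  obtain ⟨μ', hμ'map, hμ'le⟩ := exists_map_eq_forall_measure_le_thickening_add hπc hπs
    (by positivity) hπδ hCm hCd hCu hCdiam hBm hBd hBu
    (fun j => (hBdiam j).trans_lt (half_lt_self hδ)) μ ν' hle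
  have hμ' : IsProbabilityMeasure μ' :=
    have : IsProbabilityMeasure (μ'.map π) := hμ'map ▸ inferInstance
    Measure.isProbabilityMeasure_of_map π
  refine ⟨⟨μ', hμ'⟩, Subtype.ext hμ'map, ?_⟩
  show levyProkhorovEDist (μ : Measure X) μ' ≤ _
  refine levyProkhorovEDist_le_of_forall_le _ _ _ fun e S he heTop _ => ?_
  have hεe : ε < e.toReal := (ENNReal.ofReal_lt_iff_lt_toReal hε.le heTop.ne).1 he
  calc (μ : Measure X) S ≤ μ' (thickening (3 * (ε / 3)) S) + Fintype.card (Fin k) * η := hμ'le S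
    _ ≤ μ' (thickening e.toReal S) + e := by
      gcongr
      · linarith
      · rw [Fintype.card_fin]
        exact ENNReal.mul_div_le.trans he.le

theorem isOpenMap_pushPM_of_isOpenMap (hπc : Continuous π) (hπs : Function.Surjective π)
    (hπ : IsOpenMap π) : IsOpenMap (pushPM π hπc.measurable) := by
  refine IsOpenMap.of_nhds_le fun μ G hG => ?_
  let e := LevyProkhorov.probabilityMeasureHomeomorph (Ω := X)
  have hG' : e.symm ⁻¹' (pushPM π hπc.measurable ⁻¹' G) ∈ 𝓝 (e μ) :=
    e.symm.continuous.continuousAt.preimage_mem_nhds (by simpa using hG)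
  obtain ⟨r, hr, hball⟩ := EMetric.mem_nhds_iff.1 hG'
  obtain ⟨ε, -, hε, hεr⟩ := ENNReal.lt_iff_exists_real_btwn.1 hr
  filter_upwards [eventually_exists_pushPM_eq_levyProkhorovEDist_le hπc hπs hπ μ
    (ENNReal.ofReal_pos.1 hε)] with ν hν
  obtain ⟨μ', rfl, hμ'⟩ := hν
  refine hball (a := e μ') ?_
  show levyProkhorovEDist _ _ < r
  rw [levyProkhorovEDist_comm]
  exact hμ'.trans_lt hεr

end OpenMap

theorem MeasureTheory.ProbabilityMeasure.isOpen_setOf_pos_measure {Ω : Type*} [MeasurableSpace Ω]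
    [TopologicalSpace Ω] [OpensMeasurableSpace Ω] [HasOuterApproxClosed Ω] {U : Set Ω}
    (hU : IsOpen U) : IsOpen {μ : ProbabilityMeasure Ω | 0 < (μ : Measure Ω) U} :=
  isOpen_iff_mem_nhds.2 fun _ hμ => eventually_lt_of_lt_liminf
    (hμ.trans_le (ProbabilityMeasure.le_liminf_measure_open_of_tendsto tendsto_id hU))

theorem isOpenMap_of_isOpenMap_pushPM {X Y : Type*} [MetricSpace X] [MeasurableSpace X]
    [BorelSpace X] [MetricSpace Y] [MeasurableSpace Y] [BorelSpace Y] {π : X → Y}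
    (hπc : Continuous π) (h : IsOpenMap (pushPM π hπc.measurable)) : IsOpenMap π := by
  intro U hU
  have hUimage : π '' U = diracProba ⁻¹'
      (pushPM π hπc.measurable '' {μ | 0 < (μ : Measure X) U}) := by
    ext y
    constructor
    · rintro ⟨x, hx, rfl⟩
      refine ⟨diracProba x, ?_, Subtype.ext (Measure.map_dirac' hπc.measurable x)⟩
      show 0 < Measure.dirac x U
      rw [Measure.dirac_apply_of_mem hx]
      exact one_pos
    · rintro ⟨μ, hμU, hμ⟩
      have hfiber : (μ : Measure X) (π ⁻¹' {y})ᶜ = 0 := by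
        have := congrArg (fun ν : ProbabilityMeasure Y => (ν : Measure Y) {y}ᶜ) hμ
        simpa [pushPM, diracProba,
          Measure.map_apply hπc.measurable (measurableSet_singleton y).compl] using this
      obtain ⟨x, hxU, hxy⟩ :=
        nonempty_of_measure_ne_zero ((measure_inter_conull hfiber).trans_ne hμU.ne')
      exact ⟨x, hxU, hxy⟩
  rw [hUimage]
  exact (h _ (ProbabilityMeasure.isOpen_setOf_pos_measure hU)).preimage continuous_diracProba

theorem stmt1 {X Y : Type*}
    [MetricSpace X] [CompactSpace X] [MeasurableSpace X] [BorelSpace X]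
    [MetricSpace Y] [CompactSpace Y] [MeasurableSpace Y] [BorelSpace Y]
    (π : X → Y) (hπc : Continuous π) (hπs : Function.Surjective π) :
    IsOpenMap π ↔ IsOpenMap (pushPM π hπc.measurable) :=
  ⟨isOpenMap_pushPM_of_isOpenMap hπc hπs, isOpenMap_of_isOpenMap_pushPM hπc⟩
end

section
/- Let G be a countably infinite discrete amenable group, let π: (X,G) → (Y,G) be a factor map between G-systems, and let V_1, V_2 be two disjoint subsets of X. Set U = {X \ V_1, X \ V_2}. Then h_top(U, G | π) > 0 if and only if the pair (V_1, V_2) is independent with respect to π. -/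
open MeasureTheory Topology Filter Set
open scoped ENNReal NNReal

/-- A Følner sequence for a countable discrete group `G`: a sequence of nonempty finite
subsets `F n` with `|F n ∆ g·(F n)| / |F n| → 0` for every `g ∈ G`.  Its existence is
equivalent to amenability of `G`. -/
def IsFolnerSeq {G : Type*} [Group G] (F : ℕ → Finset G) : Prop :=
  (∀ n, (F n).Nonempty) ∧
    ∀ g : G, Filter.Tendsto
      (fun n => ((symmDiff (F n : Set G) ((g * ·) '' (F n : Set G))).ncard : ℝ) /
        ((F n).card : ℝ)) Filter.atTop (nhds 0)

/-- `coverNum U E` : the minimal cardinality of a subfamily of the cover `U`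
covering `E`. -/
noncomputable def coverNum {X ι : Type*} (U : ι → Set X) (E : Set X) : ℕ :=
  sInf {m : ℕ | ∃ s : Finset ι, s.card = m ∧ E ⊆ ⋃ i ∈ s, U i}

/-- `fiberCoverNum π U = sup_{y} coverNum U (π ⁻¹' {y})`, i.e. `N(U|π)`. -/
noncomputable def fiberCoverNum {X Y ι : Type*} (π : X → Y) (U : ι → Set X) : ℕ :=
  sSup (Set.range fun y : Y => coverNum U (π ⁻¹' {y}))

/-- The topological conditional entropy `h_top(U, G|π)` of the cover `U` relative to
`π`, for the action `T : G → X → X`: the infimum over nonempty finite `F ⊆ G` of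
`(1/|F|) log N(⋁_{g ∈ F} g⁻¹U | π)` (which equals the limit along any Følner
sequence). -/
noncomputable def relCoverEntropy {G X Y ι : Type*} (T : G → X → X) (π : X → Y)
    (U : ι → Set X) : ℝ :=
  ⨅ F : {F : Finset G // F.Nonempty},
    Real.log (fiberCoverNum π
      (fun σ : G → ι => {x : X | ∀ g ∈ F.1, T g x ∈ U (σ g)}) : ℝ) / (F.1.card : ℝ)

/-- `J ⊆ G` is an independence set of the pair `(V₁, V₂)` w.r.t. `π`: for every
nonempty finite `I ⊆ J` there is `y ∈ Y` with
`π⁻¹(y) ∩ ⋂_{g ∈ I} g⁻¹ V_{σ(g)} ≠ ∅` for all `σ : I → {1,2}`. -/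
def IsIndepSet {G X Y : Type*} (T : G → X → X) (π : X → Y) (V₁ V₂ : Set X)
    (J : Set G) : Prop :=
  ∀ I : Finset G, I.Nonempty → ↑I ⊆ J → ∃ y : Y, ∀ σ : G → Fin 2,
    (π ⁻¹' {y} ∩ ⋂ g ∈ I, {x : X | T g x ∈ (![V₁, V₂]) (σ g)}).Nonempty

/-- The pair `(V₁, V₂)` is independent w.r.t. `π`: there is `c > 0` such that every
nonempty finite `F ⊆ G` contains an independence set `I` with `|I| ≥ c|F|`. -/
def IndepPair {G X Y : Type*} (T : G → X → X) (π : X → Y) (V₁ V₂ : Set X) : Prop :=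
  ∃ c : ℝ, 0 < c ∧ ∀ F : Finset G, F.Nonempty →
    ∃ I : Finset G, ↑I ⊆ (F : Set G) ∧ IsIndepSet T π V₁ V₂ ↑I ∧
      c * (F.card : ℝ) ≤ (I.card : ℝ)


/-!
Encode a point `x` by its pattern `g ↦ some i` if `T g x ∈ V_i`, `none` if `T g x` lies in
neither set (well defined because `V₁` and `V₂` are disjoint). Then `x` lies in the member of
`⋁_{g ∈ F} g⁻¹U` indexed by `σ : G → Fin 2` iff its pattern avoids `σ` on `F`, and a finite `I`
is an independence set iff the patterns of one fibre strongly shatter `I`. Both directions thus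
become statements about a family `P` of partial patterns on a finite set `Z`.

If `P` strongly shatters `I ⊆ Z`, every family avoiding all of `P` restricts onto `I → Fin 2`,
so it has at least `2^|I|` members: independence gives entropy at least `c log 2`.

Conversely, split `P` by the value at a point `z`. By a Sauer–Shelah count, one of the halves
`{p | p z = some i}` has at most half of the `m` sets shattered by `P`; recursing gives an
avoiding family of size `D(|Z|, m)`, where `D(n + 1, m) = D(n, m) + D(n, m / 2)`, so that
`D(n, m) ≤ (1 + 2^{-k})^n m^k` for every `k`. If only sets of size at most `t` are shattered then
`m ≤ e^{at} (1 + 2^{-a})^{|Z|}`. For `k`, `a` large and `t = c|Z|` with `c` small the family has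
fewer than `e^{h|Z|}` members, which entropy `h > 0` rules out.
-/

section PartialPatterns

open Finset Real

variable {ι : Type*}

def Avoids (σ : ι → Fin 2) (p : ι → Option (Fin 2)) (Z : Finset ι) : Prop :=
  ∀ z ∈ Z, p z ≠ some (σ z)

def CoversOn (C : Finset (ι → Fin 2)) (P : Set (ι → Option (Fin 2))) (Z : Finset ι) : Prop :=
  ∀ p ∈ P, ∃ σ ∈ C, Avoids σ p Z

def StronglyShatters (P : Set (ι → Option (Fin 2))) (I : Finset ι) : Prop :=
  ∀ τ : ι → Fin 2, ∃ p ∈ P, ∀ z ∈ I, p z = some (τ z)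

open Classical in
noncomputable def shatteredSets (P : Set (ι → Option (Fin 2))) (Z : Finset ι) :
    Finset (Finset ι) :=
  {I ∈ Z.powerset | StronglyShatters P I}

lemma mem_shatteredSets {P : Set (ι → Option (Fin 2))} {Z I : Finset ι} :
    I ∈ shatteredSets P Z ↔ I ⊆ Z ∧ StronglyShatters P I := by
  simp [shatteredSets]

lemma StronglyShatters.mono {P P' : Set (ι → Option (Fin 2))} {I J : Finset ι}
    (h : StronglyShatters P I) (hP : P ⊆ P') (hJ : J ⊆ I) : StronglyShatters P' J :=
  fun τ => (h τ).imp fun _ ⟨hp, hpτ⟩ => ⟨hP hp, fun z hz => hpτ z (hJ hz)⟩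

lemma stronglyShatters_empty {P : Set (ι → Option (Fin 2))} (hP : P.Nonempty) :
    StronglyShatters P ∅ :=
  fun _ => let ⟨p, hp⟩ := hP; ⟨p, hp, by simp⟩

lemma stronglyShatters_insert [DecidableEq ι] {P : Set (ι → Option (Fin 2))} {z : ι}
    {I : Finset ι} (h : ∀ i, StronglyShatters {p | p ∈ P ∧ p z = some i} I) :
    StronglyShatters P (insert z I) := by
  intro τ
  obtain ⟨p, ⟨hp, hpz⟩, hpI⟩ := h (τ z) τ
  refine ⟨p, hp, fun w hw => ?_⟩
  rcases mem_insert.1 hw with rfl | hw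
  exacts [hpz, hpI w hw]

lemma one_le_card_shatteredSets {P : Set (ι → Option (Fin 2))} (hP : P.Nonempty)
    (Z : Finset ι) : 1 ≤ (shatteredSets P Z).card :=
  card_pos.2 ⟨∅, mem_shatteredSets.2 ⟨empty_subset Z, stronglyShatters_empty hP⟩⟩

lemma shatteredSets_mono {P P' : Set (ι → Option (Fin 2))} {Z Z' : Finset ι}
    (hP : P ⊆ P') (hZ : Z ⊆ Z') : shatteredSets P Z ⊆ shatteredSets P' Z' := fun _ hI =>
  let ⟨hIZ, hI⟩ := mem_shatteredSets.1 hI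
  mem_shatteredSets.2 ⟨hIZ.trans hZ, hI.mono hP subset_rfl⟩

/-- The Sauer–Shelah step: a set shattered by both halves of `P` yields one more shattered set
containing `z`. -/
lemma card_shatteredSets_add_le [DecidableEq ι] {P : Set (ι → Option (Fin 2))} {z : ι}
    {Z : Finset ι} (hz : z ∉ Z) :
    (shatteredSets {p | p ∈ P ∧ p z = some 0} Z).card +
        (shatteredSets {p | p ∈ P ∧ p z = some 1} Z).card ≤
      (shatteredSets P (insert z Z)).card := by
  set S₀ := shatteredSets {p | p ∈ P ∧ p z = some 0} Z
  set S₁ := shatteredSets {p | p ∈ P ∧ p z = some 1} Z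
  have hS₀ : ∀ I ∈ S₀, z ∉ I := fun I hI h => hz ((mem_shatteredSets.1 hI).1 h)
  have hunion : S₀ ∪ S₁ ⊆ shatteredSets P Z :=
    union_subset (shatteredSets_mono (fun _ hp => hp.1) subset_rfl)
      (shatteredSets_mono (fun _ hp => hp.1) subset_rfl)
  have hinter : (S₀ ∩ S₁).image (insert z) ⊆ shatteredSets P (insert z Z) := by
    intro J hJ
    obtain ⟨I, hI, rfl⟩ := mem_image.1 hJ
    obtain ⟨hIZ, hI₀⟩ := mem_shatteredSets.1 (mem_inter.1 hI).1
    have hI₁ := (mem_shatteredSets.1 (mem_inter.1 hI).2).2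
    refine mem_shatteredSets.2 ⟨insert_subset_insert z hIZ, stronglyShatters_insert fun i => ?_⟩
    fin_cases i
    exacts [hI₀, hI₁]
  have hdisj : Disjoint (shatteredSets P Z) ((S₀ ∩ S₁).image (insert z)) := by
    refine disjoint_left.2 fun I hI hI' => ?_
    obtain ⟨J, -, rfl⟩ := mem_image.1 hI'
    exact hz ((mem_shatteredSets.1 hI).1 (mem_insert_self z J))
  have hinj : Set.InjOn (insert z) (↑(S₀ ∩ S₁) : Set (Finset ι)) := fun I hI J hJ hIJ => by
    rw [← erase_insert (hS₀ I (mem_inter.1 hI).1), ← erase_insert (hS₀ J (mem_inter.1 hJ).1), hIJ]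
  calc S₀.card + S₁.card = (S₀ ∪ S₁).card + ((S₀ ∩ S₁).image (insert z)).card := by
        rw [card_image_of_injOn hinj, card_union_add_card_inter]
    _ ≤ (shatteredSets P Z).card + ((S₀ ∩ S₁).image (insert z)).card := by
        gcongr
    _ = (shatteredSets P Z ∪ (S₀ ∩ S₁).image (insert z)).card := (card_union_of_disjoint hdisj).symm
    _ ≤ (shatteredSets P (insert z Z)).card := Finset.card_le_card <|
        union_subset (shatteredSets_mono subset_rfl (subset_insert z Z)) hinter

lemma Avoids.update_insert [DecidableEq ι] {σ : ι → Fin 2} {p : ι → Option (Fin 2)}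
    {Z : Finset ι} {z : ι} {i : Fin 2} (h : Avoids σ p Z) (hz : p z ≠ some i) :
    Avoids (Function.update σ z i) p (insert z Z) := by
  intro w hw
  by_cases hwz : w = z
  · subst hwz
    simpa using hz
  · rw [Function.update_of_ne hwz]
    exact h w ((mem_insert.1 hw).resolve_left hwz)

lemma CoversOn.exists_insert [DecidableEq ι] {P : Set (ι → Option (Fin 2))} {Z : Finset ι}
    {z : ι} {i j : Fin 2} (hij : i ≠ j) {C₁ C₂ : Finset (ι → Fin 2)}
    (h₁ : CoversOn C₁ {p | p ∈ P ∧ p z ≠ some i} Z)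
    (h₂ : CoversOn C₂ {p | p ∈ P ∧ p z = some i} Z) :
    ∃ C, CoversOn C P (insert z Z) ∧ C.card ≤ C₁.card + C₂.card := by
  classical
  refine ⟨C₁.image (Function.update · z i) ∪ C₂.image (Function.update · z j), fun p hp => ?_,
    (Finset.card_union_le _ _).trans (add_le_add card_image_le card_image_le)⟩
  by_cases hpz : p z = some i
  · obtain ⟨σ, hσ, hσp⟩ := h₂ p ⟨hp, hpz⟩
    exact ⟨_, mem_union_right _ (mem_image_of_mem _ hσ),
      hσp.update_insert (by simpa [hpz] using hij)⟩
  · obtain ⟨σ, hσ, hσp⟩ := h₁ p ⟨hp, hpz⟩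
    exact ⟨_, mem_union_left _ (mem_image_of_mem _ hσ), hσp.update_insert hpz⟩

def coverBound : ℕ → ℕ → ℕ
  | _, 0 => 0
  | 0, _ + 1 => 1
  | n + 1, m + 1 => coverBound n (m + 1) + coverBound n ((m + 1) / 2)

lemma coverBound_succ {n m : ℕ} (hm : m ≠ 0) :
    coverBound (n + 1) m = coverBound n m + coverBound n (m / 2) := by
  obtain ⟨m, rfl⟩ := Nat.exists_eq_succ_of_ne_zero hm
  rfl

lemma coverBound_le_two_pow (n m : ℕ) : coverBound n m ≤ 2 ^ n := by
  induction n generalizing m with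
  | zero => cases m <;> simp [coverBound]
  | succ n ih =>
    rcases eq_or_ne m 0 with rfl | hm
    · simp [coverBound]
    · rw [coverBound_succ hm, pow_succ]
      linarith [ih m, ih (m / 2)]

lemma coverBound_le_mul_pow (k n m : ℕ) :
    (coverBound n m : ℝ) ≤ (1 + (2 ^ k)⁻¹) ^ n * (m : ℝ) ^ k := by
  induction n generalizing m with
  | zero =>
    cases m with
    | zero => simp [coverBound]
    | succ m => simpa [coverBound] using one_le_pow₀ (by simp : (1 : ℝ) ≤ m + 1)
  | succ n ih =>
    rcases eq_or_ne m 0 with rfl | hm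
    · simp only [coverBound, CharP.cast_eq_zero]; positivity
    have hhalf : ((m / 2 : ℕ) : ℝ) ^ k ≤ (2 ^ k)⁻¹ * (m : ℝ) ^ k := by
      rw [← inv_pow, ← mul_pow, inv_mul_eq_div]
      exact pow_le_pow_left₀ (by positivity) Nat.cast_div_le k
    calc (coverBound (n + 1) m : ℝ) = coverBound n m + coverBound n (m / 2) := by
          rw [coverBound_succ hm, Nat.cast_add]
      _ ≤ (1 + (2 ^ k)⁻¹) ^ n * (m : ℝ) ^ k + (1 + (2 ^ k)⁻¹) ^ n * ((m / 2 : ℕ) : ℝ) ^ k :=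
          add_le_add (ih m) (ih (m / 2))
      _ ≤ (1 + (2 ^ k)⁻¹) ^ n * (m : ℝ) ^ k + (1 + (2 ^ k)⁻¹) ^ n * ((2 ^ k)⁻¹ * (m : ℝ) ^ k) := by
          gcongr
      _ = (1 + (2 ^ k)⁻¹) ^ (n + 1) * (m : ℝ) ^ k := by ring

theorem exists_coversOn_card_le_coverBound (Z : Finset ι) :
    ∀ (P : Set (ι → Option (Fin 2))) (m : ℕ), (shatteredSets P Z).card ≤ m →
      ∃ C : Finset (ι → Fin 2), CoversOn C P Z ∧ C.card ≤ coverBound Z.card m := by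
  classical
  induction Z using Finset.induction_on with
  | empty =>
    intro P m hm
    rcases P.eq_empty_or_nonempty with rfl | hP
    · exact ⟨∅, fun p hp => hp.elim, Nat.zero_le _⟩
    · obtain ⟨m, rfl⟩ := Nat.exists_eq_succ_of_ne_zero
        (Nat.one_le_iff_ne_zero.1 ((one_le_card_shatteredSets hP ∅).trans hm))
      exact ⟨{0}, fun p _ => ⟨0, mem_singleton_self _, fun z hz => absurd hz (notMem_empty z)⟩,
        by simp [coverBound]⟩
  | insert z Z hz ih =>
    intro P m hm
    rcases P.eq_empty_or_nonempty with rfl | hP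
    · exact ⟨∅, fun p hp => hp.elim, Nat.zero_le _⟩
    have hm0 : m ≠ 0 := Nat.one_le_iff_ne_zero.1 ((one_le_card_shatteredSets hP _).trans hm)
    obtain ⟨i, hi⟩ : ∃ i : Fin 2,
        2 * (shatteredSets {p | p ∈ P ∧ p z = some i} Z).card ≤ m := by
      have := (card_shatteredSets_add_le (P := P) hz).trans hm
      rcases le_total (shatteredSets {p | p ∈ P ∧ p z = some 0} Z).card
        (shatteredSets {p | p ∈ P ∧ p z = some 1} Z).card with h | h
      exacts [⟨0, by omega⟩, ⟨1, by omega⟩]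
    obtain ⟨C₁, hC₁, hC₁card⟩ := ih {p | p ∈ P ∧ p z ≠ some i} m
      ((Finset.card_le_card (shatteredSets_mono (fun p hp => hp.1) (subset_insert z Z))).trans hm)
    obtain ⟨C₂, hC₂, hC₂card⟩ := ih {p | p ∈ P ∧ p z = some i} (m / 2) (by omega)
    obtain ⟨C, hC, hCcard⟩ := hC₁.exists_insert (j := i + 1) (by fin_cases i <;> decide) hC₂
    refine ⟨C, hC, ?_⟩
    rw [card_insert_of_notMem hz, coverBound_succ hm0]
    omega

lemma exists_coversOn_card_le_two_pow (P : Set (ι → Option (Fin 2))) (Z : Finset ι) :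
    ∃ C : Finset (ι → Fin 2), CoversOn C P Z ∧ C.card ≤ 2 ^ Z.card :=
  let ⟨C, hC, hCcard⟩ := exists_coversOn_card_le_coverBound Z P _ le_rfl
  ⟨C, hC, hCcard.trans (coverBound_le_two_pow _ _)⟩

lemma StronglyShatters.two_pow_card_le {P : Set (ι → Option (Fin 2))} {I Z : Finset ι}
    {C : Finset (ι → Fin 2)} (hI : StronglyShatters P I) (hIZ : I ⊆ Z) (hC : CoversOn C P Z) :
    2 ^ I.card ≤ C.card := by
  classical
  have hsurj : Set.SurjOn (fun (σ : ι → Fin 2) (z : I) => σ z) ↑C ↑(univ : Finset (I → Fin 2)) := by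
    intro τ _
    -- realise the opposite of `τ` on `I`; a `σ ∈ C` avoiding it must agree with `τ` there
    obtain ⟨p, hp, hpI⟩ := hI fun z => if h : z ∈ I then τ ⟨z, h⟩ + 1 else 0
    obtain ⟨σ, hσ, hσp⟩ := hC p hp
    refine ⟨σ, hσ, funext fun z => ?_⟩
    have hne : τ z + 1 ≠ σ z := by simpa [hpI z z.2, z.2] using hσp z (hIZ z.2)
    exact (by decide : ∀ a b : Fin 2, b + 1 ≠ a → a = b) _ _ hne
  simpa [Fintype.card_fun] using card_le_card_of_surjOn _ hsurj

lemma two_pow_le_exp (a : ℕ) : (2 : ℝ) ^ a ≤ exp a := by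
  rw [← exp_one_pow]
  exact pow_le_pow_left₀ zero_le_two (by linarith [add_one_le_exp 1]) a

lemma one_add_pow_le_exp {x : ℝ} (hx : 0 ≤ x) (n : ℕ) : (1 + x) ^ n ≤ exp (n * x) := by
  rw [exp_nat_mul]
  exact pow_le_pow_left₀ (by linarith) (by linarith [add_one_le_exp x]) n

/-- Counting shattered sets through `∑_{I ⊆ Z} 2^{-a|I|} = (1 + 2^{-a})^{|Z|}`. -/
lemma card_shatteredSets_le_exp {P : Set (ι → Option (Fin 2))} {Z : Finset ι} (a : ℕ) {t : ℝ}
    (ht : ∀ I ⊆ Z, StronglyShatters P I → (I.card : ℝ) ≤ t) :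
    ((shatteredSets P Z).card : ℝ) ≤ exp (a * t + Z.card / 2 ^ a) := by
  have hterm : ∀ I ∈ shatteredSets P Z, (1 : ℝ) ≤ exp (a * t) * ((2 ^ a)⁻¹) ^ I.card := by
    intro I hI
    obtain ⟨hIZ, hIs⟩ := mem_shatteredSets.1 hI
    rw [inv_pow, ← div_eq_mul_inv, one_le_div (by positivity), ← pow_mul]
    calc (2 : ℝ) ^ (a * I.card) ≤ exp (a * I.card : ℕ) := two_pow_le_exp _
      _ ≤ exp (a * t) := by
        push_cast
        gcongr
        exact ht I hIZ hIs
  calc ((shatteredSets P Z).card : ℝ) = ∑ I ∈ shatteredSets P Z, 1 := by simp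
    _ ≤ ∑ I ∈ shatteredSets P Z, exp (a * t) * ((2 ^ a)⁻¹) ^ I.card := sum_le_sum hterm
    _ ≤ ∑ I ∈ Z.powerset, exp (a * t) * ((2 ^ a)⁻¹) ^ I.card :=
      sum_le_sum_of_subset_of_nonneg (fun I hI => mem_powerset.2 (mem_shatteredSets.1 hI).1)
        (fun _ _ _ => by positivity)
    _ = exp (a * t) * (1 + (2 ^ a)⁻¹) ^ Z.card := by
      rw [← mul_sum, add_comm, ← sum_pow_mul_eq_add_pow]
      simp
    _ ≤ exp (a * t) * exp (Z.card * (2 ^ a)⁻¹) := by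
      gcongr
      exact one_add_pow_le_exp (by positivity) _
    _ = exp (a * t + Z.card / 2 ^ a) := by rw [← exp_add, div_eq_mul_inv]

lemma exists_coversOn_card_le_exp (P : Set (ι → Option (Fin 2))) (Z : Finset ι) (k a : ℕ)
    {t : ℝ} (ht : ∀ I ⊆ Z, StronglyShatters P I → (I.card : ℝ) ≤ t) :
    ∃ C : Finset (ι → Fin 2), CoversOn C P Z ∧
      (C.card : ℝ) ≤ exp (Z.card / 2 ^ k + k * (a * t + Z.card / 2 ^ a)) := by
  obtain ⟨C, hC, hCcard⟩ := exists_coversOn_card_le_coverBound Z P _ le_rfl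
  refine ⟨C, hC, ?_⟩
  calc (C.card : ℝ) ≤ coverBound Z.card (shatteredSets P Z).card := by exact_mod_cast hCcard
    _ ≤ (1 + (2 ^ k)⁻¹) ^ Z.card * ((shatteredSets P Z).card : ℝ) ^ k :=
      coverBound_le_mul_pow _ _ _
    _ ≤ exp (Z.card * (2 ^ k)⁻¹) * exp (a * t + Z.card / 2 ^ a) ^ k := by
      gcongr
      exacts [one_add_pow_le_exp (by positivity) _, card_shatteredSets_le_exp a ht]
    _ = exp (Z.card / 2 ^ k + k * (a * t + Z.card / 2 ^ a)) := by
      rw [← exp_nat_mul, ← exp_add]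
      ring_nf

theorem exists_stronglyShatters_card_ge {h : ℝ} (hh : 0 < h) :
    ∃ c : ℝ, 0 < c ∧ ∀ (Z : Finset ι) (P : Set (ι → Option (Fin 2))), Z.Nonempty →
      (∀ C : Finset (ι → Fin 2), CoversOn C P Z → exp (h * Z.card) ≤ C.card) →
      ∃ I ⊆ Z, StronglyShatters P I ∧ c * Z.card ≤ I.card := by
  -- `k`, `a` and `c` make each of the three terms of the exponent in
  -- `exists_coversOn_card_le_exp` at most `h |Z| / 4`
  obtain ⟨k, hk⟩ := pow_unbounded_of_one_lt (4 / h) one_lt_two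
  obtain ⟨a, ha⟩ := pow_unbounded_of_one_lt (4 * k / h) one_lt_two
  refine ⟨h / (4 * (k * a + 1)), by positivity, fun Z P hZ hcov => ?_⟩
  by_contra! hsmall
  set n : ℝ := (Z.card : ℝ)
  have hn : 0 < n := by simpa [n] using hZ.card_pos
  obtain ⟨C, hC, hCcard⟩ := exists_coversOn_card_le_exp P Z k a
    fun I hIZ hI => (hsmall I hIZ hI).le
  have hk' : n / 2 ^ k ≤ h * n / 4 := by
    rw [div_le_iff₀ (by positivity)]
    nlinarith [(div_lt_iff₀ hh).1 hk]
  have ha' : k * (n / 2 ^ a) ≤ h * n / 4 := by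
    rw [← mul_div_assoc, div_le_iff₀ (by positivity)]
    nlinarith [(div_lt_iff₀ hh).1 ha]
  have hc' : k * (a * (h / (4 * (k * a + 1)) * n)) ≤ h * n / 4 := by
    rw [show (k : ℝ) * (a * (h / (4 * (k * a + 1)) * n)) = h * n / 4 * (k * a / (k * a + 1)) by
      field_simp]
    exact mul_le_of_le_one_right (by positivity) ((div_le_one (by positivity)).2 (by linarith))
  have hexp := exp_le_exp.1 ((hcov C hC).trans hCcard)
  linarith [mul_pos hh hn]

end PartialPatterns

section Dynamics

variable {G X Y ι : Type*}

lemma coverNum_le {U : ι → Set X} {E : Set X} {s : Finset ι} (h : E ⊆ ⋃ i ∈ s, U i) :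
    coverNum U E ≤ s.card :=
  Nat.sInf_le ⟨s, rfl, h⟩

lemma exists_card_eq_coverNum {U : ι → Set X} {E : Set X}
    (h : ∃ s : Finset ι, E ⊆ ⋃ i ∈ s, U i) :
    ∃ s : Finset ι, s.card = coverNum U E ∧ E ⊆ ⋃ i ∈ s, U i :=
  Nat.sInf_mem (s := {m | ∃ s : Finset ι, s.card = m ∧ E ⊆ ⋃ i ∈ s, U i})
    (let ⟨s, hs⟩ := h; ⟨s.card, s, rfl, hs⟩)

lemma coverNum_le_fiberCoverNum {π : X → Y} {U : ι → Set X} {b : ℕ}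
    (hb : ∀ y, coverNum U (π ⁻¹' {y}) ≤ b) (y : Y) :
    coverNum U (π ⁻¹' {y}) ≤ fiberCoverNum π U :=
  le_csSup ⟨b, Set.forall_mem_range.2 hb⟩ ⟨y, rfl⟩

lemma exists_coverNum_eq_fiberCoverNum {π : X → Y} {U : ι → Set X} {b : ℕ}
    (hb : ∀ y, coverNum U (π ⁻¹' {y}) ≤ b) (hU : fiberCoverNum π U ≠ 0) :
    ∃ y, coverNum U (π ⁻¹' {y}) = fiberCoverNum π U := by
  refine Nat.sSup_mem ?_ ⟨b, Set.forall_mem_range.2 hb⟩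
  by_contra hempty
  rw [Set.not_nonempty_iff_eq_empty] at hempty
  exact hU (by rw [fiberCoverNum, hempty]; exact csSup_empty)

lemma Finset.nonempty_of_mul_card_le {α β : Type*} {F : Finset α} {I : Finset β} {c : ℝ}
    (hc : 0 < c) (hF : F.Nonempty) (h : c * F.card ≤ I.card) : I.Nonempty :=
  Finset.card_pos.1 (by exact_mod_cast (mul_pos hc (by exact_mod_cast hF.card_pos)).trans_le h)

def joinCover (T : G → X → X) (U : ι → Set X) (F : Finset G) (σ : G → ι) : Set X :=
  {x | ∀ g ∈ F, T g x ∈ U (σ g)}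

lemma relCoverEntropy_le (T : G → X → X) (π : X → Y) (U : ι → Set X) {F : Finset G}
    (hF : F.Nonempty) :
    relCoverEntropy T π U ≤ Real.log (fiberCoverNum π (joinCover T U F)) / F.card :=
  ciInf_le (f := fun F : {F : Finset G // F.Nonempty} =>
      Real.log (fiberCoverNum π (joinCover T U F.1)) / F.1.card)
    ⟨0, Set.forall_mem_range.2 fun _ => div_nonneg (Real.log_natCast_nonneg _) (Nat.cast_nonneg _)⟩
    ⟨F, hF⟩

lemma exists_exp_mul_le_coverNum {T : G → X → X} {π : X → Y} {U : ι → Set X}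
    (hpos : 0 < relCoverEntropy T π U) {F : Finset G} (hF : F.Nonempty) {b : ℕ}
    (hb : ∀ y, coverNum (joinCover T U F) (π ⁻¹' {y}) ≤ b) :
    ∃ y, Real.exp (relCoverEntropy T π U * F.card) ≤ coverNum (joinCover T U F) (π ⁻¹' {y}) := by
  set N := fiberCoverNum π (joinCover T U F)
  have hF' : (0 : ℝ) < F.card := by exact_mod_cast hF.card_pos
  have hlog : relCoverEntropy T π U * F.card ≤ Real.log N :=
    (le_div_iff₀ hF').1 (relCoverEntropy_le T π U hF)
  have hN : N ≠ 0 := by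
    rintro hN
    rw [hN, Nat.cast_zero, Real.log_zero] at hlog
    exact (mul_pos hpos hF').not_ge hlog
  obtain ⟨y, hy⟩ := exists_coverNum_eq_fiberCoverNum hb hN
  exact ⟨y, hy ▸ (Real.le_log_iff_exp_le (by positivity)).1 hlog⟩

open Classical in
noncomputable def pattern (T : G → X → X) (V₁ V₂ : Set X) (x : X) (g : G) : Option (Fin 2) :=
  if T g x ∈ V₁ then some 0 else if T g x ∈ V₂ then some 1 else none

variable {T : G → X → X} {π : X → Y} {V₁ V₂ : Set X}

lemma pattern_eq_some_iff (hV : Disjoint V₁ V₂) {x : X} {g : G} {i : Fin 2} :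
    pattern T V₁ V₂ x g = some i ↔ T g x ∈ ![V₁, V₂] i := by
  have hV₂ := fun h : T g x ∈ V₁ => Set.disjoint_left.1 hV h
  fin_cases i <;> by_cases h₁ : T g x ∈ V₁ <;> simp_all [pattern]

lemma mem_joinCover_iff_avoids (hV : Disjoint V₁ V₂) {F : Finset G} {σ : G → Fin 2} {x : X} :
    x ∈ joinCover T ![V₁ᶜ, V₂ᶜ] F σ ↔ Avoids σ (pattern T V₁ V₂ x) F := by
  refine forall₂_congr fun g _ => ?_
  rw [Ne, pattern_eq_some_iff hV]
  generalize σ g = i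
  fin_cases i <;> rfl

lemma subset_biUnion_joinCover_iff (hV : Disjoint V₁ V₂) {F : Finset G} {E : Set X}
    {C : Finset (G → Fin 2)} :
    E ⊆ ⋃ σ ∈ C, joinCover T ![V₁ᶜ, V₂ᶜ] F σ ↔ CoversOn C (pattern T V₁ V₂ '' E) F := by
  simp only [CoversOn, Set.forall_mem_image, Set.subset_def, Set.mem_iUnion, exists_prop,
    mem_joinCover_iff_avoids hV]

lemma coverNum_joinCover_le_two_pow (hV : Disjoint V₁ V₂) (F : Finset G) (E : Set X) :
    coverNum (joinCover T ![V₁ᶜ, V₂ᶜ] F) E ≤ 2 ^ F.card :=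
  let ⟨_, hC, hCcard⟩ := exists_coversOn_card_le_two_pow (pattern T V₁ V₂ '' E) F
  (coverNum_le ((subset_biUnion_joinCover_iff hV).2 hC)).trans hCcard

lemma two_pow_card_le_coverNum_joinCover (hV : Disjoint V₁ V₂) {F I : Finset G} {E : Set X}
    (hI : StronglyShatters (pattern T V₁ V₂ '' E) I) (hIF : I ⊆ F) :
    2 ^ I.card ≤ coverNum (joinCover T ![V₁ᶜ, V₂ᶜ] F) E := by
  obtain ⟨_, hC, -⟩ := exists_coversOn_card_le_two_pow (pattern T V₁ V₂ '' E) F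
  obtain ⟨s, hs, hsE⟩ := exists_card_eq_coverNum ⟨_, (subset_biUnion_joinCover_iff hV).2 hC⟩
  exact hs ▸ hI.two_pow_card_le hIF ((subset_biUnion_joinCover_iff hV).1 hsE)

lemma stronglyShatters_image_pattern_iff (hV : Disjoint V₁ V₂) {E : Set X} {I : Finset G} :
    StronglyShatters (pattern T V₁ V₂ '' E) I ↔
      ∀ σ : G → Fin 2, (E ∩ ⋂ g ∈ I, {x | T g x ∈ ![V₁, V₂] (σ g)}).Nonempty := by
  simp only [StronglyShatters, Set.exists_mem_image, pattern_eq_some_iff hV, Set.Nonempty,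
    Set.mem_inter_iff, Set.mem_iInter]
  rfl

lemma isIndepSet_iff_exists_stronglyShatters (hV : Disjoint V₁ V₂) {I : Finset G}
    (hI : I.Nonempty) :
    IsIndepSet T π V₁ V₂ I ↔ ∃ y, StronglyShatters (pattern T V₁ V₂ '' (π ⁻¹' {y})) I := by
  simp only [stronglyShatters_image_pattern_iff hV]
  refine ⟨fun h => h I hI subset_rfl, fun ⟨y, hy⟩ J _ hJI => ⟨y, fun σ => ?_⟩⟩
  obtain ⟨x, hx, hxI⟩ := hy σ
  exact ⟨x, hx, Set.biInter_subset_biInter_left hJI hxI⟩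

theorem IndepPair.relCoverEntropy_pos [Nonempty G] (hV : Disjoint V₁ V₂)
    (h : IndepPair T π V₁ V₂) : 0 < relCoverEntropy T π ![V₁ᶜ, V₂ᶜ] := by
  obtain ⟨c, hc, hF⟩ := h
  have : Nonempty {F : Finset G // F.Nonempty} :=
    ⟨⟨{Classical.arbitrary G}, Finset.singleton_nonempty _⟩⟩
  refine (mul_pos hc (Real.log_pos one_lt_two)).trans_le (le_ciInf fun F => ?_)
  obtain ⟨I, hIF, hI, hcard⟩ := hF F.1 F.2
  have hF' : (0 : ℝ) < F.1.card := by exact_mod_cast F.2.card_pos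
  obtain ⟨y, hy⟩ := (isIndepSet_iff_exists_stronglyShatters hV
    (Finset.nonempty_of_mul_card_le hc F.2 hcard)).1 hI
  have hN : 2 ^ I.card ≤ fiberCoverNum π (joinCover T ![V₁ᶜ, V₂ᶜ] F.1) :=
    (two_pow_card_le_coverNum_joinCover hV hy (Finset.coe_subset.1 hIF)).trans
      (coverNum_le_fiberCoverNum (fun _ => coverNum_joinCover_le_two_pow hV F.1 _) y)
  rw [le_div_iff₀ hF']
  calc c * Real.log 2 * F.1.card ≤ I.card * Real.log 2 := by nlinarith [Real.log_pos one_lt_two]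
    _ = Real.log ((2 ^ I.card : ℕ) : ℝ) := by rw [Nat.cast_pow, Nat.cast_ofNat, Real.log_pow]
    _ ≤ Real.log (fiberCoverNum π (joinCover T ![V₁ᶜ, V₂ᶜ] F.1)) :=
      Real.log_le_log (by positivity) (by exact_mod_cast hN)

theorem IndepPair.of_relCoverEntropy_pos (hV : Disjoint V₁ V₂)
    (hpos : 0 < relCoverEntropy T π ![V₁ᶜ, V₂ᶜ]) : IndepPair T π V₁ V₂ := by
  obtain ⟨c, hc, hshatters⟩ := exists_stronglyShatters_card_ge (ι := G) hpos
  refine ⟨c, hc, fun F hF => ?_⟩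
  obtain ⟨y, hy⟩ :=
    exists_exp_mul_le_coverNum hpos hF fun _ => coverNum_joinCover_le_two_pow hV F _
  obtain ⟨I, hIF, hI, hcard⟩ := hshatters F _ hF fun C hC =>
    hy.trans (by exact_mod_cast coverNum_le ((subset_biUnion_joinCover_iff hV).2 hC))
  refine ⟨I, Finset.coe_subset.2 hIF, ?_, hcard⟩
  exact (isIndepSet_iff_exists_stronglyShatters hV
    (Finset.nonempty_of_mul_card_le hc hF hcard)).2 ⟨y, hI⟩

end Dynamics

theorem stmt3_general {G X Y : Type*} [Group G] [MulAction G X]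
    (π : X → Y) (V₁ V₂ : Set X) (hV : Disjoint V₁ V₂) :
    0 < relCoverEntropy (fun (g : G) (x : X) => g • x) π ![V₁ᶜ, V₂ᶜ] ↔
      IndepPair (fun (g : G) (x : X) => g • x) π V₁ V₂ :=
  ⟨IndepPair.of_relCoverEntropy_pos hV, IndepPair.relCoverEntropy_pos hV⟩

theorem stmt3 {G X Y : Type*} [Group G] [Countable G] [Infinite G]
    [MetricSpace X] [CompactSpace X] [MetricSpace Y] [CompactSpace Y]
    [MulAction G X] [MulAction G Y]
    (hG : ∃ F : ℕ → Finset G, IsFolnerSeq F)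
    (hcX : ∀ g : G, Continuous fun x : X => g • x)
    (hcY : ∀ g : G, Continuous fun y : Y => g • y)
    (π : X → Y) (hπc : Continuous π) (hπs : Function.Surjective π)
    (hπG : ∀ (g : G) (x : X), π (g • x) = g • π x)
    (V₁ V₂ : Set X) (hV : Disjoint V₁ V₂) :
    0 < relCoverEntropy (fun (g : G) (x : X) => g • x) π ![V₁ᶜ, V₂ᶜ] ↔
      IndepPair (fun (g : G) (x : X) => g • x) π V₁ V₂ :=
  stmt3_general π V₁ V₂ hV
end

section
/- Given an integer k ≥ 2 and a real number λ > 1, there exists a constant c > 0 such that for all n ∈ ℕ, if S ⊆ {1,…,k}^{[n]} satisfies |S| ≥ ((k−1)λ)^n, then there is a subset I ⊆ [n] with |I| ≥ cn and S|_I = {1,…,k}^I. -/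
open MeasureTheory Topology Filter Set
open scoped ENNReal NNReal

/-!
A family `S` of `k`-colourings of `[n]` with more than `∑_{i<d} C(n,i) (k-1)^(n-i)` members
shatters some `d`-set (Karpovsky–Milman). By induction on `n`: among the prefixes of members of
`S`, let `T` be those with some extension in `S` and `T'` those with all `k` extensions, so that
`|S| ≤ (k-1)|T| + |T'|`; by Pascal's rule for the bound, `T` shatters a `d`-set or `T'` shatters
a `(d-1)`-set, to which the last coordinate can be added.

With `K = k - 1` and `0 < x ≤ 1`, comparing with the binomial expansion of `(x + K)^n` gives
`x^d ∑_{i<d} C(n,i) K^(n-i) ≤ (x + K)^n`. Pick `x` with `x + K < Kλ` and `m` with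
`(x + K)^m < x (Kλ)^m`; for `d ≤ n/m` the `m`-th power of this estimate shows that the bound is
below `(Kλ)^n`, so `c = 1/(2m)` works.
-/

open Finset

def Shatters {ι α : Type*} (S : Finset (ι → α)) (I : Finset ι) : Prop :=
  ∀ σ : ι → α, ∃ τ ∈ S, ∀ i ∈ I, τ i = σ i

lemma Shatters.empty {ι α : Type*} {S : Finset (ι → α)} (hS : S.Nonempty) : Shatters S ∅ :=
  fun _ => ⟨hS.choose, hS.choose_spec, by simp⟩

def shatterBound (q n d : ℕ) : ℕ :=
  ∑ i ∈ range d, n.choose i * q ^ (n - i)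

lemma shatterBound_zero_succ (q d : ℕ) : shatterBound q 0 (d + 1) = 1 := by
  simp [shatterBound, sum_range_succ', Nat.choose_zero_succ]

lemma shatterBound_succ_succ (q n e : ℕ) :
    shatterBound q (n + 1) (e + 1) = q * shatterBound q n (e + 1) + shatterBound q n e := by
  induction e with
  | zero => simp [shatterBound, pow_succ, Nat.mul_comm]
  | succ e ih =>
    have key : n.choose (e + 1) * q ^ (n - e) = q * (n.choose (e + 1) * q ^ (n - (e + 1))) := by
      rcases le_or_gt (e + 1) n with h | h
      · rw [show n - e = n - (e + 1) + 1 by omega, pow_succ]; ring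
      · simp [Nat.choose_eq_zero_of_lt h]
    simp only [shatterBound] at ih ⊢
    rw [sum_range_succ, ih, sum_range_succ (n := e + 1), sum_range_succ (n := e),
      show n + 1 - (e + 1) = n - e by omega, Nat.choose_succ_succ', Nat.add_mul, key]
    ring

section Shattering

variable {α : Type*} [Fintype α] [DecidableEq α] {n : ℕ}

def extendable (S : Finset (Fin (n + 1) → α)) : Finset (Fin n → α) :=
  Finset.univ.filter fun σ => ∃ v, Fin.snoc σ v ∈ S

def fullyExtendable (S : Finset (Fin (n + 1) → α)) : Finset (Fin n → α) :=
  Finset.univ.filter fun σ => ∀ v, Fin.snoc σ v ∈ S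

lemma card_le_card_sub_one_mul_add (F : Finset α) :
    #F ≤ (Fintype.card α - 1) * (if F.Nonempty then 1 else 0) +
      if F = Finset.univ then 1 else 0 := by
  rcases F.eq_empty_or_nonempty with rfl | hne
  · simp
  by_cases hU : F = Finset.univ
  · subst hU; simp only [hne, card_univ, ↓reduceIte]; omega
  have := (card_lt_iff_ne_univ F).2 hU
  simp only [hne, hU, ↓reduceIte]
  omega

lemma card_le_mul_card_extendable_add (S : Finset (Fin (n + 1) → α)) :
    #S ≤ (Fintype.card α - 1) * #(extendable S) + #(fullyExtendable S) := by
  set F : (Fin n → α) → Finset α := fun σ => Finset.univ.filter fun v => Fin.snoc σ v ∈ S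
  calc #S = ∑ τ : Fin (n + 1) → α, if τ ∈ S then 1 else 0 := by simp
    _ = ∑ p : α × (Fin n → α), if Fin.snoc p.2 p.1 ∈ S then 1 else 0 :=
      (Fintype.sum_equiv (Fin.snocEquiv fun _ => α) _ _ fun _ => rfl).symm
    _ = ∑ σ, ∑ v, if Fin.snoc σ v ∈ S then 1 else 0 := Fintype.sum_prod_type_right _
    _ = ∑ σ, #(F σ) := by simp [F]
    _ ≤ ∑ σ, ((Fintype.card α - 1) * (if (F σ).Nonempty then 1 else 0) +
          if F σ = Finset.univ then 1 else 0) :=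
      sum_le_sum fun σ _ => card_le_card_sub_one_mul_add (F σ)
    _ = (Fintype.card α - 1) * #(extendable S) + #(fullyExtendable S) := by
      simp only [sum_add_distrib, ← mul_sum, sum_boole, Nat.cast_id]
      simp [F, extendable, fullyExtendable, Finset.filter_nonempty_iff,
        Finset.eq_univ_iff_forall]

lemma Shatters.of_extendable {S : Finset (Fin (n + 1) → α)} {I : Finset (Fin n)}
    (h : Shatters (extendable S) I) : Shatters S (I.map Fin.castSuccEmb) := by
  intro σ
  obtain ⟨τ, hτ, hτσ⟩ := h (Fin.init σ)
  obtain ⟨v, hv⟩ := (Finset.mem_filter.1 hτ).2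
  refine ⟨Fin.snoc τ v, hv, ?_⟩
  simp only [Finset.mem_map, Fin.coe_castSuccEmb, forall_exists_index, and_imp]
  rintro _ i hi rfl
  rw [Fin.snoc_castSucc]
  exact hτσ i hi

lemma Shatters.of_fullyExtendable {S : Finset (Fin (n + 1) → α)} {I : Finset (Fin n)}
    (h : Shatters (fullyExtendable S) I) :
    Shatters S (insert (Fin.last n) (I.map Fin.castSuccEmb)) := by
  intro σ
  obtain ⟨τ, hτ, hτσ⟩ := h (Fin.init σ)
  refine ⟨Fin.snoc τ (σ (Fin.last n)), (Finset.mem_filter.1 hτ).2 _, ?_⟩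
  simp only [Finset.mem_insert, Finset.mem_map, Fin.coe_castSuccEmb, forall_eq_or_imp,
    Fin.snoc_last, true_and, forall_exists_index, and_imp]
  rintro _ i hi rfl
  rw [Fin.snoc_castSucc]
  exact hτσ i hi

theorem exists_card_eq_shatters_of_shatterBound_lt {d : ℕ} {S : Finset (Fin n → α)}
    (h : shatterBound (Fintype.card α - 1) n d < #S) :
    ∃ I : Finset (Fin n), #I = d ∧ Shatters S I := by
  induction n generalizing d with
  | zero =>
    obtain _ | e := d
    · exact ⟨∅, rfl, .empty (card_pos.1 (by simpa [shatterBound] using h))⟩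
    · rw [shatterBound_zero_succ] at h
      exact absurd h (by simpa using card_le_univ S)
  | succ n ih =>
    obtain _ | e := d
    · exact ⟨∅, rfl, .empty (card_pos.1 (by simpa [shatterBound] using h))⟩
    have hS := card_le_mul_card_extendable_add S
    rw [shatterBound_succ_succ] at h
    rcases lt_or_ge (shatterBound (Fintype.card α - 1) n (e + 1)) #(extendable S) with hext | hext
    · obtain ⟨I, hI, hIS⟩ := ih hext
      exact ⟨_, by simp [hI], hIS.of_extendable⟩
    · have hfull : shatterBound (Fintype.card α - 1) n e < #(fullyExtendable S) := by
        have := Nat.mul_le_mul_left (Fintype.card α - 1) hext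
        omega
      obtain ⟨I, hI, hIS⟩ := ih hfull
      refine ⟨_, ?_, hIS.of_fullyExtendable⟩
      rw [card_insert_of_notMem (by simp [Fin.castSucc_ne_last]), card_map, hI]

end Shattering

lemma pow_mul_sum_choose_mul_pow_le {K x : ℝ} (hK : 0 ≤ K) (hx0 : 0 ≤ x) (hx1 : x ≤ 1)
    {n d : ℕ} (hd : d ≤ n + 1) :
    x ^ d * ∑ i ∈ range d, (n.choose i : ℝ) * K ^ (n - i) ≤ (x + K) ^ n := by
  rw [mul_sum, add_pow]
  calc ∑ i ∈ range d, x ^ d * ((n.choose i : ℝ) * K ^ (n - i))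
      ≤ ∑ i ∈ range d, x ^ i * K ^ (n - i) * n.choose i := by
        refine sum_le_sum fun i hi => ?_
        calc x ^ d * ((n.choose i : ℝ) * K ^ (n - i))
            ≤ x ^ i * ((n.choose i : ℝ) * K ^ (n - i)) := by
              gcongr ?_ * _
              exact pow_le_pow_of_le_one hx0 hx1 (mem_range.1 hi).le
          _ = x ^ i * K ^ (n - i) * n.choose i := by ring
    _ ≤ ∑ i ∈ range (n + 1), x ^ i * K ^ (n - i) * n.choose i :=
        sum_le_sum_of_subset_of_nonneg (range_subset_range.2 hd) fun _ _ _ => by positivity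

lemma sum_choose_mul_pow_lt {K L x : ℝ} (hK : 0 ≤ K) (hL : 0 ≤ L) (hx0 : 0 < x) (hx1 : x ≤ 1)
    {m n d : ℕ} (hm0 : 0 < m) (hm : (x + K) ^ m < x * L ^ m) (hdm : d * m ≤ n) (hn : 0 < n) :
    ∑ i ∈ range d, (n.choose i : ℝ) * K ^ (n - i) < L ^ n := by
  set A := ∑ i ∈ range d, (n.choose i : ℝ) * K ^ (n - i)
  have hd : d ≤ n + 1 := (Nat.le_mul_of_pos_right d hm0).trans (hdm.trans n.le_succ)
  have key : x ^ (d * m) * A ^ m < x ^ (d * m) * (L ^ n) ^ m :=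
    calc x ^ (d * m) * A ^ m = (x ^ d * A) ^ m := by ring
      _ ≤ ((x + K) ^ n) ^ m :=
        pow_le_pow_left₀ (by positivity) (pow_mul_sum_choose_mul_pow_le hK hx0.le hx1 hd) m
      _ = ((x + K) ^ m) ^ n := by rw [← pow_mul, ← pow_mul, mul_comm]
      _ < (x * L ^ m) ^ n := pow_lt_pow_left₀ hm (by positivity) hn.ne'
      _ = x ^ n * (L ^ n) ^ m := by ring
      _ ≤ x ^ (d * m) * (L ^ n) ^ m :=
        mul_le_mul_of_nonneg_right (pow_le_pow_of_le_one hx0.le hx1 hdm) (by positivity)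
  exact (pow_lt_pow_iff_left₀ (by positivity) (by positivity) hm0.ne').1
    (lt_of_mul_lt_mul_left key (by positivity))

lemma exists_pow_add_lt_mul_pow {K lam : ℝ} (hK : 0 < K) (hlam : 1 < lam) :
    ∃ x : ℝ, ∃ m : ℕ, 0 < x ∧ x ≤ 1 ∧ 0 < m ∧ (x + K) ^ m < x * (K * lam) ^ m := by
  set x := min 1 (K * (lam - 1) / 2)
  have hx0 : 0 < x := lt_min one_pos (by nlinarith)
  have hx1 : x ≤ 1 := min_le_left _ _
  have hρ : 1 < K * lam / (x + K) := by
    rw [one_lt_div (by positivity)]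
    nlinarith [min_le_right 1 (K * (lam - 1) / 2)]
  obtain ⟨m, hm⟩ := pow_unbounded_of_one_lt x⁻¹ hρ
  refine ⟨x, m, hx0, hx1, Nat.pos_of_ne_zero ?_, ?_⟩
  · rintro rfl
    exact absurd hm (not_lt.2 ((pow_zero _).trans_le (one_le_inv₀ hx0 |>.2 hx1)))
  · rw [div_pow, lt_div_iff₀ (by positivity), inv_mul_lt_iff₀ hx0] at hm
    exact hm

lemma exists_sum_range_ceil_choose_mul_pow_lt {K lam : ℝ} (hK : 0 < K) (hlam : 1 < lam) :
    ∃ c : ℝ, 0 < c ∧ ∀ n : ℕ,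
      ∑ i ∈ range ⌈c * n⌉₊, (n.choose i : ℝ) * K ^ (n - i) < (K * lam) ^ n := by
  obtain ⟨x, m, hx0, hx1, hm0, hm⟩ := exists_pow_add_lt_mul_pow hK hlam
  have hm' : (0 : ℝ) < m := by exact_mod_cast hm0
  set c : ℝ := 1 / (2 * m) with hc
  refine ⟨c, by positivity, fun n => ?_⟩
  rcases n.eq_zero_or_pos with rfl | hn
  · simp
  rcases le_or_gt ⌈c * n⌉₊ 1 with hd | hd
  · calc _ ≤ ∑ i ∈ range 1, (n.choose i : ℝ) * K ^ (n - i) :=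
          sum_le_sum_of_subset_of_nonneg (range_subset_range.2 hd) fun _ _ _ => by positivity
      _ = K ^ n := by simp
      _ < (K * lam) ^ n := pow_lt_pow_left₀ (by nlinarith) hK.le hn.ne'
  · refine sum_choose_mul_pow_lt hK.le (by positivity) hx0 hx1 hm0 hm ?_ hn
    have h1 : 1 < c * n := by exact_mod_cast Nat.lt_ceil.1 hd
    have h2 : (⌈c * n⌉₊ : ℝ) < c * n + 1 := Nat.ceil_lt_add_one (by positivity)
    have : (⌈c * n⌉₊ : ℝ) * m ≤ n :=
      calc (⌈c * n⌉₊ : ℝ) * m ≤ (2 * c * n) * m := by gcongr; linarith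
        _ = n := by rw [hc]; field_simp
    exact_mod_cast this

theorem stmt5 (k : ℕ) (hk : 2 ≤ k) (lam : ℝ) (hlam : 1 < lam) :
    ∃ c : ℝ, 0 < c ∧ ∀ n : ℕ, ∀ S : Finset (Fin n → Fin k),
      (((k : ℝ) - 1) * lam) ^ n ≤ (S.card : ℝ) →
      ∃ I : Finset (Fin n), c * (n : ℝ) ≤ (I.card : ℝ) ∧
        ∀ σ : Fin n → Fin k, ∃ τ ∈ S, ∀ i ∈ I, τ i = σ i := by
  have hK : (0 : ℝ) < k - 1 := by
    have : (2 : ℝ) ≤ k := by exact_mod_cast hk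
    linarith
  obtain ⟨c, hc, hbound⟩ := exists_sum_range_ceil_choose_mul_pow_lt hK hlam
  refine ⟨c, hc, fun n S hS => ?_⟩
  have hcast : (shatterBound (Fintype.card (Fin k) - 1) n ⌈c * n⌉₊ : ℝ) =
      ∑ i ∈ range ⌈c * n⌉₊, (n.choose i : ℝ) * ((k : ℝ) - 1) ^ (n - i) := by
    simp [shatterBound, Nat.cast_sub (by omega : 1 ≤ k)]
  obtain ⟨I, hI, hIS⟩ := exists_card_eq_shatters_of_shatterBound_lt
    (by exact_mod_cast (hcast ▸ hbound n).trans_le hS : shatterBound _ n ⌈c * n⌉₊ < #S)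
  exact ⟨I, hI ▸ Nat.le_ceil _, hIS⟩
end

section
/- Let π: X → Y be a continuous surjective map between two compact metric spaces, let π̃: M(X) → M(Y) be the induced map, and for each n ∈ ℕ let π̃_n: M_n(X) → M_n(Y) be the restriction of π̃ to M_n(X). Then the union over all n ∈ ℕ of R_{π̃_n} = {(μ_1,μ_2) ∈ M_n(X) × M_n(X) : π̃_n(μ_1) = π̃_n(μ_2)} is dense in R_{π̃} = {(μ_1,μ_2) ∈ M(X) × M(X) : π̃(μ_1) = π̃(μ_2)}. -/
open MeasureTheory Topology Filter Set
open scoped ENNReal NNReal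

/-- `Mn X n` : the subset `M_n(X) = {(1/n) ∑_{i=1}^n δ_{x i}}` of `M(X)`. -/
def Mn (X : Type*) [MeasurableSpace X] (n : ℕ) : Set (ProbabilityMeasure X) :=
  {μ | ∃ x : Fin n → X, μ.toMeasure = (n : ℝ≥0∞)⁻¹ • ∑ i : Fin n, Measure.dirac (x i)}

lemma map_avgDirac {X Y : Type*} [MeasurableSpace X] [MeasurableSpace Y]
    (f : X → Y) (hf : Measurable f) (n : ℕ) (x : Fin n → X) :
    Measure.map f ((n : ℝ≥0∞)⁻¹ • ∑ i : Fin n, Measure.dirac (x i))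
      = (n : ℝ≥0∞)⁻¹ • ∑ i : Fin n, Measure.dirac (f (x i)) := by
  rw [Measure.map_smul]
  congr 1
  have h : ∀ s : Finset (Fin n),
      Measure.map f (∑ i ∈ s, Measure.dirac (x i)) = ∑ i ∈ s, Measure.dirac (f (x i)) := by
    intro s
    induction s using Finset.cons_induction with
    | empty => simp
    | cons a s ha ih =>
        rw [Finset.sum_cons, Finset.sum_cons, Measure.map_add _ _ hf, ih,
          Measure.map_dirac' hf]
  exact h Finset.univ

/-- The restriction `M_n(X) → M_n(Y)` of the induced map `M(X) → M(Y)` of a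
measurable map `f : X → Y`. -/
noncomputable def pushMn {X Y : Type*} [MeasurableSpace X] [MeasurableSpace Y]
    (f : X → Y) (hf : Measurable f) (n : ℕ) (μ : Mn X n) : Mn Y n := by
  refine ⟨pushPM f hf μ.1, ?_⟩
  obtain ⟨x, hx⟩ := μ.2
  refine ⟨fun i => f (x i), ?_⟩
  show (μ.1.toMeasure).map f = _
  rw [hx, map_avgDirac f hf]

open ProbabilityTheory BoundedContinuousFunction

/-!
If `π₊μ₁ = π₊μ₂ = ν`, disintegrate `μ₁` and `μ₂` over `ν` along the fibres of `π` and take the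
fibrewise product of the conditional measures: this is a coupling `γ` of `μ₁` and `μ₂` carried by
the fibred product `{(x, x') | π x = π x'}`. Every probability measure carried by a set `S` is a
weak-* limit of uniform empirical measures `(1/n) ∑ δ_{z_i}` with all `z_i ∈ S`, because the
vector of integrals of finitely many test functions lies in the closed convex hull of their values
on `S`. The two marginals of empirical measures approximating `γ` then lie in `M_n(X)`, have the
same image under `π`, and converge to `(μ₁, μ₂)`.
-/

section UniformAverages

variable {E : Type*} [NormedAddCommGroup E] [NormedSpace ℝ E]

def uniformAverages (T : Set E) : Set E :=
  {v | ∃ n : ℕ, 0 < n ∧ ∃ t : Fin n → E, (∀ i, t i ∈ T) ∧ v = (n : ℝ)⁻¹ • ∑ i, t i}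

lemma card_inv_smul_sum_mem_uniformAverages {ι : Type*} [Fintype ι] [Nonempty ι] {T : Set E}
    {t : ι → E} (ht : ∀ i, t i ∈ T) :
    (Fintype.card ι : ℝ)⁻¹ • ∑ i, t i ∈ uniformAverages T := by
  let e := Fintype.equivFin ι
  exact ⟨_, Fintype.card_pos, fun r => t (e.symm r), fun r => ht _, by rw [e.symm.sum_comp]⟩

/-- Replacing the weights `w i` by `⌊N w i⌋₊ / ∑ j, ⌊N w j⌋₊` and letting `N → ∞`. -/
lemma sum_smul_mem_closure_uniformAverages {ι : Type*} [Fintype ι] {T : Set E} {w : ι → ℝ}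
    {v : ι → E} (hw₀ : ∀ i, 0 ≤ w i) (hw₁ : ∑ i, w i = 1) (hv : ∀ i, v i ∈ T) :
    ∑ i, w i • v i ∈ closure (uniformAverages T) := by
  set c : ℕ → ι → ℕ := fun N i => ⌊w i * N⌋₊
  set M : ℕ → ℕ := fun N => ∑ i, c N i
  have hc : ∀ i, Tendsto (fun N : ℕ => (c N i : ℝ) / N) atTop (𝓝 (w i)) := fun i =>
    (tendsto_nat_floor_mul_div_atTop (hw₀ i)).comp tendsto_natCast_atTop_atTop
  have hM : Tendsto (fun N : ℕ => (M N : ℝ) / N) atTop (𝓝 1) := by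
    simp only [M, Nat.cast_sum, Finset.sum_div, ← hw₁]
    exact tendsto_finsetSum _ fun i _ => hc i
  have hlim : Tendsto (fun N => ∑ i, ((c N i : ℝ) / N / (M N / N)) • v i) atTop
      (𝓝 (∑ i, w i • v i)) := by
    simpa using tendsto_finsetSum _ fun i _ => ((hc i).div hM one_ne_zero).smul_const (v i)
  refine mem_closure_of_tendsto hlim ?_
  filter_upwards [hM.eventually (lt_mem_nhds one_pos), eventually_ne_atTop 0] with N hMN hN
  have hMpos : 0 < M N := Nat.pos_of_ne_zero fun h => by simp [h] at hMN
  have : Nonempty (Σ i, Fin (c N i)) := Fintype.card_pos_iff.mp (by simpa using hMpos)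
  convert card_inv_smul_sum_mem_uniformAverages (T := T) (t := fun p : Σ i, Fin (c N i) => v p.1)
    (fun p => hv p.1) using 1
  have hN' : (N : ℝ) ≠ 0 := Nat.cast_ne_zero.mpr hN
  simp only [div_div_div_cancel_right₀ hN']
  simp only [Fintype.card_sigma, Fintype.card_fin,
    Fintype.sum_sigma, Finset.sum_const, Finset.card_univ, Finset.smul_sum, div_eq_inv_mul,
    mul_smul, Nat.cast_smul_eq_nsmul, M, Nat.cast_sum]

lemma convexHull_subset_closure_uniformAverages (T : Set E) :
    convexHull ℝ T ⊆ closure (uniformAverages T) := by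
  intro x hx
  obtain ⟨ι, _, w, v, hw₀, hw₁, hv, rfl⟩ := mem_convexHull_iff_exists_fintype.mp hx
  exact sum_smul_mem_closure_uniformAverages hw₀ hw₁ hv

lemma integral_mem_closure_uniformAverages [CompleteSpace E] {Z : Type*} [MeasurableSpace Z]
    (μ : Measure Z) [IsProbabilityMeasure μ] {F : Z → E} (hF : Integrable F μ) {T : Set E}
    (hT : ∀ᵐ z ∂μ, F z ∈ T) : ∫ z, F z ∂μ ∈ closure (uniformAverages T) := by
  have h : ∫ z, F z ∂μ ∈ closure (convexHull ℝ T) :=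
    (convex_convexHull ℝ T).closure.integral_mem isClosed_closure
      (hT.mono fun _ hz => subset_closure (subset_convexHull ℝ T hz)) hF
  exact closure_minimal (convexHull_subset_closure_uniformAverages T) isClosed_closure h

end UniformAverages

section EmpiricalMeasures

variable {Z : Type*} [MeasurableSpace Z]

def empiricalMeasures (S : Set Z) : Set (ProbabilityMeasure Z) :=
  {μ | ∃ n : ℕ, 0 < n ∧ ∃ z : Fin n → Z, (∀ i, z i ∈ S) ∧
    μ.toMeasure = (n : ℝ≥0∞)⁻¹ • ∑ i, Measure.dirac (z i)}

lemma isProbabilityMeasure_inv_smul_sum_dirac {n : ℕ} (hn : 0 < n) (z : Fin n → Z) :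
    IsProbabilityMeasure ((n : ℝ≥0∞)⁻¹ • ∑ i, Measure.dirac (z i)) := by
  constructor
  simp [ENNReal.inv_mul_cancel (Nat.cast_ne_zero.mpr hn.ne') (ENNReal.natCast_ne_top n)]

variable [TopologicalSpace Z] [OpensMeasurableSpace Z]

lemma integral_inv_smul_sum_dirac {n : ℕ} (z : Fin n → Z) (f : Z →ᵇ ℝ) :
    ∫ x, f x ∂((n : ℝ≥0∞)⁻¹ • ∑ i, Measure.dirac (z i)) = (n : ℝ)⁻¹ * ∑ i, f (z i) := by
  rw [integral_smul_measure, integral_finsetSum_measure fun i _ => f.integrable _]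
  simp [integral_dirac' _ _ f.continuous.stronglyMeasurable]

lemma exists_mem_empiricalMeasures_dist_integral_lt (γ : ProbabilityMeasure Z) {S : Set Z}
    (hS : ∀ᵐ z ∂(γ : Measure Z), z ∈ S) (F : Finset (Z →ᵇ ℝ)) {ε : ℝ} (hε : 0 < ε) :
    ∃ μ ∈ empiricalMeasures S, ∀ f ∈ F,
      dist (∫ z, f z ∂(μ : Measure Z)) (∫ z, f z ∂(γ : Measure Z)) < ε := by
  let Φ : Z → F → ℝ := fun z f => f.1 z
  have hΦ : ∀ f, Integrable (Φ · f) γ := fun f => f.1.integrable γ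
  obtain ⟨v, ⟨n, hn, t, ht, rfl⟩, hv⟩ := Metric.mem_closure_iff.mp
    (integral_mem_closure_uniformAverages _ (Integrable.of_eval hΦ)
      (hS.mono fun z hz => mem_image_of_mem Φ hz)) ε hε
  choose z hzS hzt using ht
  refine ⟨⟨_, isProbabilityMeasure_inv_smul_sum_dirac hn z⟩, ⟨n, hn, z, hzS, rfl⟩, fun f hf => ?_⟩
  calc dist (∫ x, f x ∂((n : ℝ≥0∞)⁻¹ • ∑ i, Measure.dirac (z i))) (∫ x, f x ∂(γ : Measure Z))
      = dist (((n : ℝ)⁻¹ • ∑ i, t i) ⟨f, hf⟩) ((∫ x, Φ x ∂(γ : Measure Z)) ⟨f, hf⟩) := by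
        rw [integral_inv_smul_sum_dirac]
        simp [eval_integral hΦ, ← hzt, Φ]
    _ ≤ dist ((n : ℝ)⁻¹ • ∑ i, t i) (∫ x, Φ x ∂(γ : Measure Z)) := dist_le_pi_dist _ _ _
    _ < ε := by rw [dist_comm]; exact hv

/-- The approximating measures are indexed by the directed set of pairs `(F, m)`: a finite set
of test functions and a precision `1 / (m + 1)`. -/
theorem mem_closure_empiricalMeasures (γ : ProbabilityMeasure Z) {S : Set Z}
    (hS : ∀ᵐ z ∂(γ : Measure Z), z ∈ S) : γ ∈ closure (empiricalMeasures S) := by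
  classical
  choose μ hμS hμ using fun p : Finset (Z →ᵇ ℝ) × ℕ =>
    exists_mem_empiricalMeasures_dist_integral_lt γ hS p.1 (Nat.one_div_pos_of_nat (n := p.2))
  suffices Tendsto μ atTop (𝓝 γ) from mem_closure_of_tendsto this (Eventually.of_forall hμS)
  refine ProbabilityMeasure.tendsto_iff_forall_integral_tendsto.mpr fun f => ?_
  refine Metric.tendsto_atTop.mpr fun ε hε => ?_
  obtain ⟨m, hm⟩ := exists_nat_one_div_lt hε
  refine ⟨({f}, m), fun p hp => (hμ p f (hp.1 (Finset.mem_singleton_self f))).trans_le ?_⟩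
  calc 1 / ((p.2 : ℝ) + 1) ≤ 1 / ((m : ℝ) + 1) := by gcongr; exact_mod_cast hp.2
    _ ≤ ε := hm.le

end EmpiricalMeasures

section Coupling

variable {X Y : Type*} [MeasurableSpace X] [StandardBorelSpace X] [MeasurableSpace Y]
  [MeasurableEq Y] {π : X → Y}

/-- The conditional kernel of the image of `μ` on the graph of `π`. -/
lemma exists_isMarkovKernel_comp_map_eq [Nonempty X] (hπ : Measurable π) (μ : Measure X)
    [IsFiniteMeasure μ] :
    ∃ κ : Kernel Y X, IsMarkovKernel κ ∧ κ ∘ₘ μ.map π = μ ∧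
      ∀ᵐ y ∂μ.map π, ∀ᵐ x ∂κ y, π x = y := by
  have hgraph : Measurable fun x => (π x, x) := hπ.prodMk measurable_id
  set ρ := μ.map fun x => (π x, x)
  have hfst : ρ.fst = μ.map π := by
    rw [Measure.fst, Measure.map_map measurable_fst hgraph]
    rfl
  have hdis : μ.map π ⊗ₘ ρ.condKernel = ρ := hfst ▸ ρ.disintegrate ρ.condKernel
  have hmeas : MeasurableSet {p : Y × X | π p.2 = p.1} :=
    measurableSet_eq_fun (hπ.comp measurable_snd) measurable_fst
  refine ⟨ρ.condKernel, inferInstance, ?_, ?_⟩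
  · rw [← Measure.snd_compProd, hdis, Measure.snd, Measure.map_map measurable_snd hgraph]
    exact Measure.map_id
  · rw [← Measure.ae_compProd_iff hmeas, hdis, ae_map_iff hgraph.aemeasurable hmeas]
    exact ae_of_all _ fun _ => rfl

lemma exists_coupling_of_map_eq (hπ : Measurable π) (μ₁ μ₂ : Measure X)
    [IsProbabilityMeasure μ₁] [IsProbabilityMeasure μ₂] (h : μ₁.map π = μ₂.map π) :
    ∃ γ : Measure (X × X), IsProbabilityMeasure γ ∧ γ.map Prod.fst = μ₁ ∧
      γ.map Prod.snd = μ₂ ∧ ∀ᵐ p ∂γ, π p.1 = π p.2 := by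
  have := nonempty_of_isProbabilityMeasure μ₁
  have := Measure.isProbabilityMeasure_map (μ := μ₁) hπ.aemeasurable
  obtain ⟨κ₁, _, hκ₁, hfib₁⟩ := exists_isMarkovKernel_comp_map_eq hπ μ₁
  obtain ⟨κ₂, _, hκ₂, hfib₂⟩ := exists_isMarkovKernel_comp_map_eq hπ μ₂
  rw [← h] at hκ₂ hfib₂
  refine ⟨(κ₁ ×ₖ κ₂) ∘ₘ μ₁.map π, inferInstance, ?_, ?_, ?_⟩
  · rw [Measure.map_comp _ _ measurable_fst, ← Kernel.fst_eq, Kernel.fst_prod, hκ₁]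
  · rw [Measure.map_comp _ _ measurable_snd, ← Kernel.snd_eq, Kernel.snd_prod, hκ₂]
  · refine Measure.ae_comp_of_ae_ae
      (measurableSet_eq_fun (hπ.comp measurable_fst) (hπ.comp measurable_snd)) ?_
    filter_upwards [hfib₁, hfib₂] with y h₁ h₂
    rw [Kernel.prod_apply]
    filter_upwards [Measure.quasiMeasurePreserving_fst.ae h₁,
      Measure.quasiMeasurePreserving_snd.ae h₂] with p hp₁ hp₂
    rw [hp₁, hp₂]

end Coupling

lemma exists_marginals_mem_Mn {X Y : Type*} [MeasurableSpace X] [MeasurableSpace Y] {π : X → Y}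
    (hπ : Measurable π) {ρ : ProbabilityMeasure (X × X)}
    (hρ : ρ ∈ empiricalMeasures {p | π p.1 = π p.2}) :
    ∃ n, 0 < n ∧ ρ.map measurable_fst.aemeasurable ∈ Mn X n ∧
      ρ.map measurable_snd.aemeasurable ∈ Mn X n ∧
      pushPM π hπ (ρ.map measurable_fst.aemeasurable) =
        pushPM π hπ (ρ.map measurable_snd.aemeasurable) := by
  obtain ⟨n, hn, z, hz, hρ⟩ := hρ
  have hmap : ∀ f : X × X → X, Measurable f →
      (ρ : Measure (X × X)).map f = (n : ℝ≥0∞)⁻¹ • ∑ i, Measure.dirac (f (z i)) :=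
    fun f hf => hρ ▸ map_avgDirac f hf n z
  refine ⟨n, hn, ⟨_, hmap _ measurable_fst⟩, ⟨_, hmap _ measurable_snd⟩, Subtype.ext ?_⟩
  simp only [pushPM, ProbabilityMeasure.toMeasure_map, hmap _ measurable_fst,
    hmap _ measurable_snd, map_avgDirac π hπ, show ∀ i, π (z i).1 = π (z i).2 from hz]

theorem stmt7_general {X Y : Type*}
    [MetricSpace X] [CompactSpace X] [MeasurableSpace X] [BorelSpace X]
    [MetricSpace Y] [CompactSpace Y] [MeasurableSpace Y] [BorelSpace Y]
    (π : X → Y) (hπc : Continuous π) :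
    {p : ProbabilityMeasure X × ProbabilityMeasure X |
        pushPM π hπc.measurable p.1 = pushPM π hπc.measurable p.2} ⊆
      closure (⋃ (n : ℕ) (_ : 0 < n),
        {p : ProbabilityMeasure X × ProbabilityMeasure X |
          p.1 ∈ Mn X n ∧ p.2 ∈ Mn X n ∧
          pushPM π hπc.measurable p.1 = pushPM π hπc.measurable p.2}) := by
  rintro ⟨μ₁, μ₂⟩ hp
  obtain ⟨γ, hγprob, hγ₁, hγ₂, hγ⟩ :=
    exists_coupling_of_map_eq hπc.measurable (μ₁ : Measure X) μ₂ (congrArg Subtype.val hp)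
  let marginals (ρ : ProbabilityMeasure (X × X)) : ProbabilityMeasure X × ProbabilityMeasure X :=
    (ρ.map measurable_fst.aemeasurable, ρ.map measurable_snd.aemeasurable)
  have hmarginals : Continuous marginals :=
    (ProbabilityMeasure.continuous_map continuous_fst).prodMk
      (ProbabilityMeasure.continuous_map continuous_snd)
  have hγμ : marginals ⟨γ, hγprob⟩ = (μ₁, μ₂) := Prod.ext (Subtype.ext hγ₁) (Subtype.ext hγ₂)
  rw [← hγμ]
  refine closure_mono ?_ (image_closure_subset_closure_image hmarginals
    (mem_image_of_mem _ (mem_closure_empiricalMeasures ⟨γ, hγprob⟩ hγ)))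
  rintro _ ⟨ρ, hρ, rfl⟩
  obtain ⟨n, hn, h⟩ := exists_marginals_mem_Mn hπc.measurable hρ
  exact mem_iUnion₂.mpr ⟨n, hn, h⟩

theorem stmt7 {X Y : Type*}
    [MetricSpace X] [CompactSpace X] [MeasurableSpace X] [BorelSpace X]
    [MetricSpace Y] [CompactSpace Y] [MeasurableSpace Y] [BorelSpace Y]
    (π : X → Y) (hπc : Continuous π) (hπs : Function.Surjective π) :
    {p : ProbabilityMeasure X × ProbabilityMeasure X |
        pushPM π hπc.measurable p.1 = pushPM π hπc.measurable p.2} ⊆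
      closure (⋃ (n : ℕ) (_ : 0 < n),
        {p : ProbabilityMeasure X × ProbabilityMeasure X |
          p.1 ∈ Mn X n ∧ p.2 ∈ Mn X n ∧
          pushPM π hπc.measurable p.1 = pushPM π hπc.measurable p.2}) :=
  stmt7_general π hπc
end

section
/- Let π: X → Y be a surjective continuous map between two compact metrizable spaces. If the induced map π̃: M(X) → M(Y) is open, then π is open. -/
open MeasureTheory Topology Filter Set
open scoped ENNReal NNReal

/-! For `x ∈ U` open, the measures charging `U` form an open neighbourhood of `δₓ`, so its image
under `π̃` is a neighbourhood of `δ_{π x}`. Since `y ↦ δ_y` is continuous, every `y` near `π x` has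
`δ_y = π̃ μ` for some `μ` charging `U`; then `μ`-almost every point lies in `π⁻¹ {y}`, and some of
them lie in `U`. -/

lemma ProbabilityMeasure.lowerSemicontinuous_toMeasure_apply {Ω : Type*} [MeasurableSpace Ω]
    [TopologicalSpace Ω] [OpensMeasurableSpace Ω] [HasOuterApproxClosed Ω]
    {G : Set Ω} (hG : IsOpen G) :
    LowerSemicontinuous fun μ : ProbabilityMeasure Ω ↦ μ.toMeasure G := fun μ _ hc ↦
  eventually_lt_of_lt_liminf <| hc.trans_le <|
    ProbabilityMeasure.le_liminf_measure_open_of_tendsto tendsto_id hG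

lemma pushPM_diracProba {X Y : Type*} [MeasurableSpace X] [MeasurableSpace Y]
    {f : X → Y} (hf : Measurable f) (x : X) :
    pushPM f hf (diracProba x) = diracProba (f x) :=
  Subtype.ext (Measure.map_dirac' hf x)

lemma exists_mem_eq_of_pushPM_eq_diracProba {X Y : Type*} [MeasurableSpace X] [MeasurableSpace Y]
    [MeasurableSingletonClass Y] {f : X → Y} (hf : Measurable f) {μ : ProbabilityMeasure X}
    {y : Y} (hμ : pushPM f hf μ = diracProba y) {U : Set X} (hU : 0 < μ.toMeasure U) :
    ∃ x ∈ U, f x = y := by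
  have hmap : μ.toMeasure.map f = Measure.dirac y := congrArg Subtype.val hμ
  have hfiber : ∀ᵐ x ∂μ.toMeasure, f x = y := by
    refine (ae_map_iff hf.aemeasurable (measurableSet_singleton y)).1 ?_
    rw [hmap, ae_dirac_eq]
    exact mem_singleton y
  exact ((frequently_ae_mem_iff.2 hU.ne').and_eventually hfiber).exists

theorem stmt12_general {X Y : Type*}
    [MetricSpace X] [MeasurableSpace X] [BorelSpace X]
    [MetricSpace Y] [MeasurableSpace Y] [BorelSpace Y]
    (π : X → Y) (hπc : Continuous π)
    (hopen : IsOpenMap (pushPM π hπc.measurable)) :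
    IsOpenMap π := by
  intro U hU
  refine isOpen_iff_mem_nhds.2 ?_
  rintro _ ⟨x, hxU, rfl⟩
  set V := {μ : ProbabilityMeasure X | 0 < μ.toMeasure U}
  have hV : IsOpen V :=
    (ProbabilityMeasure.lowerSemicontinuous_toMeasure_apply hU).isOpen_preimage 0
  have hxV : diracProba x ∈ V := by simp [V, hxU]
  have himage : pushPM π hπc.measurable '' V ∈ 𝓝 (diracProba (π x)) :=
    pushPM_diracProba hπc.measurable x ▸ (hopen V hV).mem_nhds (mem_image_of_mem _ hxV)
  filter_upwards [continuous_diracProba.continuousAt.preimage_mem_nhds himage]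
    with y ⟨μ, hμU, hμy⟩
  exact exists_mem_eq_of_pushPM_eq_diracProba hπc.measurable hμy hμU

theorem stmt12 {X Y : Type*}
    [MetricSpace X] [CompactSpace X] [MeasurableSpace X] [BorelSpace X]
    [MetricSpace Y] [CompactSpace Y] [MeasurableSpace Y] [BorelSpace Y]
    (π : X → Y) (hπc : Continuous π) (hπs : Function.Surjective π)
    (hopen : IsOpenMap (pushPM π hπc.measurable)) :
    IsOpenMap π :=
  stmt12_general π hπc hopen
end

section
/- Let π: X → Y be a surjective continuous open map between two compact metrizable spaces. Then for every n ∈ ℕ, the restriction π̃_n: M_n(X) → M_n(Y) of the induced map π̃: M(X) → M(Y) is open. -/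
/-! With `q x = (1/n) ∑ δ_{x i}` we have `π̃_n ∘ q = q ∘ πⁿ`, and `πⁿ` is open. An empirical
measure determines the multiplicity of each atom, so the fibres of `q` are the orbits of the
permutation action on `Fin n`; hence `πⁿ` maps `q`-saturated open sets onto `q`-saturated open
sets. Since `Yⁿ` is compact and `M_n(Y)` Hausdorff, `q : Yⁿ → M_n(Y)` is a quotient map, which
turns this into openness of `π̃_n`. -/

open MeasureTheory Topology Filter Set
open scoped ENNReal NNReal

open Finset

lemma Equiv.Perm.exists_comp_eq_of_card_fiber_eq {ι α : Type*} [Fintype ι] [DecidableEq α]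
    {x x' : ι → α} (h : ∀ a, #{i | x i = a} = #{i | x' i = a}) :
    ∃ σ : Equiv.Perm ι, x' = x ∘ σ := by
  have hfiber : ∀ a, {i // x' i = a} ≃ {i // x i = a} := fun a =>
    Fintype.equivOfCardEq <| by simpa only [Fintype.card_subtype] using (h a).symm
  exact ⟨Equiv.ofFiberEquiv hfiber, funext fun i => (Equiv.ofFiberEquiv_map hfiber i).symm⟩

section avgDirac

variable {X : Type*} [MeasurableSpace X] {n : ℕ}

noncomputable def avgDirac (n : ℕ) (x : Fin n → X) : Measure X :=
  (n : ℝ≥0∞)⁻¹ • ∑ i : Fin n, Measure.dirac (x i)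

instance [NeZero n] (x : Fin n → X) : IsProbabilityMeasure (avgDirac n x) := by
  constructor
  simp only [avgDirac, Measure.smul_apply, smul_eq_mul, Measure.coe_finsetSum, Finset.sum_apply,
    measure_univ, Finset.sum_const, Finset.card_univ, Fintype.card_fin, nsmul_eq_mul, mul_one]
  exact ENNReal.inv_mul_cancel (NeZero.ne _) (ENNReal.natCast_ne_top n)

lemma avgDirac_comp_perm (x : Fin n → X) (σ : Equiv.Perm (Fin n)) :
    avgDirac n (x ∘ σ) = avgDirac n x := by
  simp only [avgDirac, Function.comp_apply, Equiv.sum_comp σ (fun i => Measure.dirac (x i))]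

lemma avgDirac_singleton [MeasurableSingletonClass X] [DecidableEq X] (x : Fin n → X) (a : X) :
    avgDirac n x {a} = (n : ℝ≥0∞)⁻¹ * #{i | x i = a} := by
  simp only [avgDirac, Measure.smul_apply, smul_eq_mul, Measure.coe_finsetSum, Finset.sum_apply,
    Measure.dirac_apply' _ (measurableSet_singleton a), Set.indicator_apply, Set.mem_singleton_iff,
    Pi.one_apply, Finset.sum_boole]

lemma exists_perm_of_avgDirac_eq [MeasurableSingletonClass X] [NeZero n] {x x' : Fin n → X}
    (h : avgDirac n x = avgDirac n x') : ∃ σ : Equiv.Perm (Fin n), x' = x ∘ σ := by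
  classical
  refine Equiv.Perm.exists_comp_eq_of_card_fiber_eq fun a => ?_
  have hmass := congrArg (· {a}) h
  simp only [avgDirac_singleton] at hmass
  exact_mod_cast (ENNReal.mul_right_inj (by simp) (by simp [NeZero.ne n])).mp hmass

lemma lintegral_avgDirac {f : X → ℝ≥0∞} (hf : Measurable f) (x : Fin n → X) :
    ∫⁻ a, f a ∂avgDirac n x = (n : ℝ≥0∞)⁻¹ * ∑ i, f (x i) := by
  rw [avgDirac, lintegral_smul_measure, lintegral_finsetSum_measure, smul_eq_mul]
  simp only [lintegral_dirac' _ hf]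

end avgDirac

namespace Mn

variable {X : Type*} [MeasurableSpace X] {n : ℕ} [NeZero n]

noncomputable def mk (x : Fin n → X) : Mn X n :=
  ⟨⟨avgDirac n x, inferInstance⟩, x, rfl⟩

lemma mk_surjective : Function.Surjective (mk : (Fin n → X) → Mn X n) := by
  rintro ⟨μ, x, hx⟩
  exact ⟨x, Subtype.ext (ProbabilityMeasure.toMeasure_injective hx.symm)⟩

lemma mk_comp_perm (x : Fin n → X) (σ : Equiv.Perm (Fin n)) : mk (x ∘ σ) = mk x :=
  Subtype.ext (ProbabilityMeasure.toMeasure_injective (avgDirac_comp_perm x σ))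

lemma exists_perm_of_mk_eq [MeasurableSingletonClass X] {x x' : Fin n → X} (h : mk x = mk x') :
    ∃ σ : Equiv.Perm (Fin n), x' = x ∘ σ :=
  exists_perm_of_avgDirac_eq (congrArg (fun μ : Mn X n => μ.1.toMeasure) h)

lemma continuous_mk [TopologicalSpace X] [OpensMeasurableSpace X] :
    Continuous (mk : (Fin n → X) → Mn X n) := by
  refine Continuous.subtype_mk (continuous_iff_continuousAt.2 fun x₀ =>
    ProbabilityMeasure.tendsto_iff_forall_lintegral_tendsto.2 fun f => ?_) _
  have hf : Continuous fun a => (f a : ℝ≥0∞) := ENNReal.continuous_coe.comp f.continuous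
  change Tendsto (fun x => ∫⁻ a, (f a : ℝ≥0∞) ∂avgDirac n x) _
    (𝓝 (∫⁻ a, (f a : ℝ≥0∞) ∂avgDirac n x₀))
  simp only [lintegral_avgDirac hf.measurable]
  refine ENNReal.Tendsto.const_mul (tendsto_finsetSum _ fun i _ => ?_)
    (Or.inr (by simp [NeZero.ne n]))
  exact (hf.comp (continuous_apply i)).tendsto x₀

lemma isQuotientMap_mk [TopologicalSpace X] [CompactSpace X] [HasOuterApproxClosed X]
    [BorelSpace X] : IsQuotientMap (mk : (Fin n → X) → Mn X n) :=
  continuous_mk.isClosedMap.isQuotientMap continuous_mk mk_surjective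

lemma pushMn_mk {Y : Type*} [MeasurableSpace Y] (f : X → Y) (hf : Measurable f) (x : Fin n → X) :
    pushMn f hf n (mk x) = mk (f ∘ x) :=
  Subtype.ext (ProbabilityMeasure.toMeasure_injective (map_avgDirac f hf n x))

end Mn

lemma IsOpenMap.of_isQuotientMap_semiconj {A B P Q : Type*} [TopologicalSpace A]
    [TopologicalSpace B] [TopologicalSpace P] [TopologicalSpace Q]
    {qA : A → P} {qB : B → Q} {g : A → B} {h : P → Q}
    (hqA : Continuous qA) (hqA' : Function.Surjective qA) (hqB : IsQuotientMap qB)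
    (hg : IsOpenMap g) (hcomm : ∀ a, h (qA a) = qB (g a))
    (hlift : ∀ a b, qB (g a) = qB b → ∃ a', qA a' = qA a ∧ g a' = b) : IsOpenMap h := by
  intro U hU
  have hsat : qB ⁻¹' (h '' U) = g '' (qA ⁻¹' U) := by
    ext b
    constructor
    · rintro ⟨p, hpU, hpb⟩
      obtain ⟨a, rfl⟩ := hqA' p
      obtain ⟨a', ha', rfl⟩ := hlift a b ((hcomm a).symm.trans hpb)
      exact ⟨a', by rwa [Set.mem_preimage, ha'], rfl⟩
    · rintro ⟨a, haU, rfl⟩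
      exact ⟨qA a, haU, hcomm a⟩
  rw [← hqB.isOpen_preimage, hsat]
  exact hg _ (hU.preimage hqA)

theorem stmt13_general {X Y : Type*}
    [MetricSpace X] [MeasurableSpace X] [BorelSpace X]
    [MetricSpace Y] [CompactSpace Y] [MeasurableSpace Y] [BorelSpace Y]
    (π : X → Y) (hπc : Continuous π)
    (hopen : IsOpenMap π) :
    ∀ n : ℕ, 0 < n → IsOpenMap (pushMn π hπc.measurable n) := by
  intro n hn
  have : NeZero n := ⟨hn.ne'⟩
  have hπn : IsOpenMap (Pi.map fun _ : Fin n => π) :=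
    .piMap (fun _ => hopen) (by simp [Filter.cofinite_eq_bot])
  refine .of_isQuotientMap_semiconj Mn.continuous_mk Mn.mk_surjective Mn.isQuotientMap_mk hπn
    (Mn.pushMn_mk π hπc.measurable) fun x y hxy => ?_
  obtain ⟨σ, rfl⟩ := Mn.exists_perm_of_mk_eq hxy
  exact ⟨x ∘ σ, Mn.mk_comp_perm x σ, rfl⟩

theorem stmt13 {X Y : Type*}
    [MetricSpace X] [CompactSpace X] [MeasurableSpace X] [BorelSpace X]
    [MetricSpace Y] [CompactSpace Y] [MeasurableSpace Y] [BorelSpace Y]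
    (π : X → Y) (hπc : Continuous π) (hπs : Function.Surjective π)
    (hopen : IsOpenMap π) :
    ∀ n : ℕ, 0 < n → IsOpenMap (pushMn π hπc.measurable n) :=
  stmt13_general π hπc hopen
end

section
/- Let π: X → Y be a surjective continuous map between two compact metrizable spaces. If there exists n ∈ ℕ such that the restriction π̃_n: M_n(X) → M_n(Y) of the induced map π̃: M(X) → M(Y) is open, then π is open. -/
open MeasureTheory Topology Filter Set
open scoped ENNReal NNReal

/-!
For `U ⊆ X` open, the measures in `M_n(X)` charging `U` form an open set `V` (portmanteau), so
`π̃_n(V)` is open. Pulling it back along the continuous map `y ↦ δ_y` into `M_n(Y)` gives an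
open neighbourhood of `π x` for every `x ∈ U`, and it lies in `π(U)`: if `π̃_n(ν) = δ_y` with
`ν = (1/n) ∑ δ_{x_i}` charging `U`, some atom `x_i` lies in `U` and every atom maps to `y`.
-/

namespace MeasureTheory

lemma ProbabilityMeasure.lowerSemicontinuous_toMeasure_apply {Ω : Type*} [MeasurableSpace Ω]
    [TopologicalSpace Ω] [OpensMeasurableSpace Ω] [HasOuterApproxClosed Ω] {G : Set Ω}
    (hG : IsOpen G) : LowerSemicontinuous fun μ : ProbabilityMeasure Ω ↦ μ.toMeasure G :=
  lowerSemicontinuous_iff_le_liminf.2 fun _ ↦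
    ProbabilityMeasure.le_liminf_measure_open_of_tendsto tendsto_id hG

lemma Measure.smul_sum_dirac_apply_eq_zero_iff {X ι : Type*} [MeasurableSpace X] [Fintype ι]
    {c : ℝ≥0∞} (hc : c ≠ 0) (x : ι → X) {s : Set X} (hs : MeasurableSet s) :
    (c • ∑ i, Measure.dirac (x i)) s = 0 ↔ ∀ i, x i ∉ s := by
  simp [Measure.finsetSum_apply, hc, Measure.dirac_apply' _ hs]

end MeasureTheory

noncomputable def diracMn {Y : Type*} [MeasurableSpace Y] {n : ℕ} (hn : n ≠ 0) (y : Y) :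
    Mn Y n :=
  ⟨diracProba y, fun _ ↦ y, by
    rw [Finset.sum_const, Finset.card_univ, Fintype.card_fin, ← Nat.cast_smul_eq_nsmul ℝ≥0∞,
      smul_smul, ENNReal.inv_mul_cancel (by exact_mod_cast hn) (by simp), one_smul]
    rfl⟩

lemma continuous_diracMn {Y : Type*} [MeasurableSpace Y] [TopologicalSpace Y]
    [OpensMeasurableSpace Y] {n : ℕ} (hn : n ≠ 0) : Continuous (diracMn (Y := Y) hn) :=
  continuous_diracProba.subtype_mk _

lemma pushMn_diracMn {X Y : Type*} [MeasurableSpace X] [MeasurableSpace Y] (f : X → Y)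
    (hf : Measurable f) {n : ℕ} (hn : n ≠ 0) (x : X) :
    pushMn f hf n (diracMn hn x) = diracMn hn (f x) :=
  Subtype.ext <| Subtype.ext <| Measure.map_dirac' hf x

lemma mem_image_of_pushMn_eq_diracMn {X Y : Type*} [MeasurableSpace X] [MeasurableSpace Y]
    [MeasurableSingletonClass Y] {f : X → Y} (hf : Measurable f) {n : ℕ} (hn : n ≠ 0)
    {U : Set X} (hU : MeasurableSet U) {ν : Mn X n} (hνU : ν.1.toMeasure U ≠ 0) {y : Y}
    (hν : pushMn f hf n ν = diracMn hn y) : y ∈ f '' U := by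
  obtain ⟨x, hx⟩ := ν.2
  have hc : (n : ℝ≥0∞)⁻¹ ≠ 0 := ENNReal.inv_ne_zero.2 (ENNReal.natCast_ne_top n)
  obtain ⟨i, hi⟩ : ∃ i, x i ∈ U := by
    by_contra! h
    exact hνU <| hx ▸ (Measure.smul_sum_dirac_apply_eq_zero_iff hc x hU).2 h
  have hmap : (n : ℝ≥0∞)⁻¹ • ∑ j, Measure.dirac (f (x j)) = Measure.dirac y := by
    rw [← map_avgDirac f hf, ← hx]
    exact congrArg (fun μ : Mn Y n ↦ μ.1.toMeasure) hν
  have hfx := (Measure.smul_sum_dirac_apply_eq_zero_iff hc (f ∘ x)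
    (measurableSet_singleton y).compl).1 (by simp [hmap])
  exact ⟨x i, hi, by simpa using hfx i⟩

theorem stmt14_general {X Y : Type*}
    [MetricSpace X] [MeasurableSpace X] [BorelSpace X]
    [MetricSpace Y] [MeasurableSpace Y] [BorelSpace Y]
    (π : X → Y) (hπc : Continuous π)
    (hopen : ∃ n : ℕ, 0 < n ∧ IsOpenMap (pushMn π hπc.measurable n)) :
    IsOpenMap π := by
  obtain ⟨n, hn, hmap⟩ := hopen
  intro U hU
  refine isOpen_iff_forall_mem_open.2 ?_
  rintro _ ⟨x, hxU, rfl⟩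
  set V : Set (Mn X n) := (fun ν ↦ ν.1.toMeasure U) ⁻¹' Ioi 0
  have hV : IsOpen V :=
    ((ProbabilityMeasure.lowerSemicontinuous_toMeasure_apply hU).isOpen_preimage 0).preimage
      continuous_subtype_val
  refine ⟨diracMn hn.ne' ⁻¹' (pushMn π hπc.measurable n '' V), ?_,
    (continuous_diracMn hn.ne').isOpen_preimage _ (hmap V hV), ?_⟩
  · rintro y ⟨ν, hνU, hνy⟩
    exact mem_image_of_pushMn_eq_diracMn hπc.measurable hn.ne' hU.measurableSet hνU.ne' hνy
  · exact ⟨diracMn hn.ne' x, by simp [V, diracMn, hxU], pushMn_diracMn _ _ _ _⟩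

theorem stmt14 {X Y : Type*}
    [MetricSpace X] [CompactSpace X] [MeasurableSpace X] [BorelSpace X]
    [MetricSpace Y] [CompactSpace Y] [MeasurableSpace Y] [BorelSpace Y]
    (π : X → Y) (hπc : Continuous π) (hπs : Function.Surjective π)
    (hopen : ∃ n : ℕ, 0 < n ∧ IsOpenMap (pushMn π hπc.measurable n)) :
    IsOpenMap π :=
  stmt14_general π hπc hopen
end

section
/- Let G be a countably infinite discrete amenable group and let π: (X,G) → (Z,G), π_1: (X,G) → (Y,G) and π_2: (Y,G) → (Z,G) be factor maps between G-systems with π = π_2 ∘ π_1. If π has relative uniformly positive entropy, then π_2 has relative uniformly positive entropy. -/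
open MeasureTheory Topology Filter Set
open scoped ENNReal NNReal

/-- `π` has relative uniformly positive entropy (rel-u.p.e) w.r.t. the action
`T : G → X → X` : every two-element open cover of `X` which is
non-dense-on-`π`-fiber has positive conditional entropy relative to `π`. -/
def RelUPE {G X Y : Type*} [TopologicalSpace X] (T : G → X → X) (π : X → Y) : Prop :=
  ∀ U₁ U₂ : Set X, IsOpen U₁ → IsOpen U₂ → U₁ ∪ U₂ = Set.univ →
    (∃ y : Y, ¬ (π ⁻¹' {y} ⊆ closure U₁) ∧ ¬ (π ⁻¹' {y} ⊆ closure U₂)) →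
    0 < relCoverEntropy T π ![U₁, U₂]

lemma aux_cover16 {G Y : Type*} [Group G] [MulAction G Y] (F : Finset G)
    (V : Fin 2 → Set Y) (hV : V 0 ∪ V 1 = Set.univ) :
    ∃ s : Finset (G → Fin 2),
      Set.univ ⊆ ⋃ σ ∈ s, {y : Y | ∀ g ∈ F, g • y ∈ V (σ g)} := by
  classical
  refine ⟨Finset.image
      (fun f : {g // g ∈ F} → Fin 2 => fun g => if h : g ∈ F then f ⟨g, h⟩ else 0)
      Finset.univ, ?_⟩
  intro y _
  have hsel : ∀ g : G, ∃ i : Fin 2, g • y ∈ V i := by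
    intro g
    have hm : g • y ∈ V 0 ∪ V 1 := hV ▸ Set.mem_univ _
    rcases hm with hm | hm
    exacts [⟨0, hm⟩, ⟨1, hm⟩]
  choose f hf using hsel
  refine Set.mem_iUnion₂.mpr
    ⟨_, Finset.mem_image.mpr ⟨fun g => f g.1, Finset.mem_univ _, rfl⟩, ?_⟩
  intro g hg
  simp only [Set.mem_setOf_eq]
  rw [dif_pos hg]
  exact hf g

theorem stmt16 {G X Y Z : Type*} [Group G] [Countable G] [Infinite G]
    [MetricSpace X] [CompactSpace X] [MetricSpace Y] [CompactSpace Y]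
    [MetricSpace Z] [CompactSpace Z]
    [MulAction G X] [MulAction G Y] [MulAction G Z]
    (hG : ∃ F : ℕ → Finset G, IsFolnerSeq F)
    (hcX : ∀ g : G, Continuous fun x : X => g • x)
    (hcY : ∀ g : G, Continuous fun y : Y => g • y)
    (hcZ : ∀ g : G, Continuous fun z : Z => g • z)
    (π : X → Z) (hπc : Continuous π) (hπs : Function.Surjective π)
    (hπG : ∀ (g : G) (x : X), π (g • x) = g • π x)
    (π₁ : X → Y) (hπ₁c : Continuous π₁) (hπ₁s : Function.Surjective π₁)
    (hπ₁G : ∀ (g : G) (x : X), π₁ (g • x) = g • π₁ x)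
    (π₂ : Y → Z) (hπ₂c : Continuous π₂) (hπ₂s : Function.Surjective π₂)
    (hπ₂G : ∀ (g : G) (y : Y), π₂ (g • y) = g • π₂ y)
    (hcomp : π = π₂ ∘ π₁)
    (h : RelUPE (fun (g : G) (x : X) => g • x) π) :
    RelUPE (fun (g : G) (y : Y) => g • y) π₂ := by
  classical
  intro V₁ V₂ hV₁ hV₂ hVcov hz
  obtain ⟨z, hz1, hz2⟩ := hz
  have hUcov : (π₁ ⁻¹' V₁) ∪ (π₁ ⁻¹' V₂) = Set.univ := by
    rw [← Set.preimage_union, hVcov, Set.preimage_univ]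
  have hfib : ∀ (V : Set Y), ¬ (π₂ ⁻¹' {z} ⊆ closure V) →
      ¬ (π ⁻¹' {z} ⊆ closure (π₁ ⁻¹' V)) := by
    intro V hV
    obtain ⟨y, hyz, hy⟩ := Set.not_subset.mp hV
    obtain ⟨x, rfl⟩ := hπ₁s y
    refine Set.not_subset.mpr ⟨x, ?_, fun hx => hy (hπ₁c.closure_preimage_subset V hx)⟩
    simpa [hcomp] using hyz
  have hU := h (π₁ ⁻¹' V₁) (π₁ ⁻¹' V₂) (hV₁.preimage hπ₁c) (hV₂.preimage hπ₁c) hUcov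
    ⟨z, hfib V₁ hz1, hfib V₂ hz2⟩
  refine lt_of_lt_of_le hU ?_
  haveI : Nonempty {F : Finset G // F.Nonempty} := ⟨⟨{1}, Finset.singleton_nonempty 1⟩⟩
  unfold relCoverEntropy
  apply ciInf_mono
  · refine ⟨0, ?_⟩
    rintro _ ⟨F, rfl⟩
    exact div_nonneg (Real.log_natCast_nonneg _) (by positivity)
  intro F
  obtain ⟨s, hs⟩ := aux_cover16 F.1 ![V₁, V₂] (by
    simpa [Matrix.cons_val_zero, Matrix.cons_val_one, Matrix.head_cons] using hVcov)
  set YCov : (G → Fin 2) → Set Y :=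
    fun σ => {y : Y | ∀ g ∈ F.1, (fun (g : G) (y : Y) => g • y) g y ∈ ![V₁, V₂] (σ g)}
    with hYCov
  set XCov : (G → Fin 2) → Set X :=
    fun σ => {x : X | ∀ g ∈ F.1, (fun (g : G) (x : X) => g • x) g x ∈ ![π₁ ⁻¹' V₁, π₁ ⁻¹' V₂] (σ g)}
    with hXCov
  have hbddV : BddAbove (Set.range fun z' : Z => coverNum YCov (π₂ ⁻¹' {z'})) := by
    refine ⟨s.card, ?_⟩
    rintro _ ⟨z', rfl⟩
    exact Nat.sInf_le ⟨s, rfl, (Set.subset_univ _).trans hs⟩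
  haveI : Nonempty Z := ⟨z⟩
  have hNle : fiberCoverNum π XCov ≤ fiberCoverNum π₂ YCov := by
    apply csSup_le (Set.range_nonempty _)
    rintro _ ⟨z', rfl⟩
    have hmem : coverNum YCov (π₂ ⁻¹' {z'}) ∈
        {m : ℕ | ∃ t : Finset (G → Fin 2), t.card = m ∧ π₂ ⁻¹' {z'} ⊆ ⋃ σ ∈ t, YCov σ} :=
      Nat.sInf_mem ⟨s.card, s, rfl, (Set.subset_univ _).trans hs⟩
    obtain ⟨t, htc, htcov⟩ := hmem
    have h1 : coverNum XCov (π ⁻¹' {z'}) ≤ coverNum YCov (π₂ ⁻¹' {z'}) := by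
      rw [← htc]
      refine Nat.sInf_le ⟨t, rfl, ?_⟩
      intro x hx
      have hx1 : π₁ x ∈ π₂ ⁻¹' {z'} := by simpa [hcomp] using hx
      obtain ⟨σ, hσt, hσ⟩ := Set.mem_iUnion₂.mp (htcov hx1)
      refine Set.mem_iUnion₂.mpr ⟨σ, hσt, ?_⟩
      intro g hg
      have hkey : (![π₁ ⁻¹' V₁, π₁ ⁻¹' V₂] (σ g)) = π₁ ⁻¹' (![V₁, V₂] (σ g)) := by
        have : ∀ i : Fin 2, (![π₁ ⁻¹' V₁, π₁ ⁻¹' V₂] i) = π₁ ⁻¹' (![V₁, V₂] i) := by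
          intro i; fin_cases i <;> rfl
        exact this (σ g)
      show (g • x) ∈ ![π₁ ⁻¹' V₁, π₁ ⁻¹' V₂] (σ g)
      rw [hkey]
      show π₁ (g • x) ∈ ![V₁, V₂] (σ g)
      rw [hπ₁G]
      exact hσ g hg
    exact h1.trans (le_csSup hbddV ⟨z', rfl⟩)
  have hcard : (0 : ℝ) < (F.1.card : ℝ) := by
    exact_mod_cast F.2.card_pos
  have hlog : Real.log (fiberCoverNum π XCov : ℝ) ≤ Real.log (fiberCoverNum π₂ YCov : ℝ) := by
    rcases Nat.eq_zero_or_pos (fiberCoverNum π XCov) with h0 | hpos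
    · rw [h0]
      simpa using Real.log_natCast_nonneg (fiberCoverNum π₂ YCov)
    · exact Real.log_le_log (by exact_mod_cast hpos) (by exact_mod_cast hNle)
  exact div_le_div_of_nonneg_right hlog hcard.le
end

section
/- Let X be a compact metric space and M(X) the space of Borel probability measures on X with the weak*-topology. The sets of the form W(U_1,…,U_k; η_1,…,η_k) = {μ ∈ M(X) : μ(U_i) > η_i for all i ∈ [k]}, where k ≥ 1, U_1,…,U_k are nonempty pairwise disjoint open subsets of X and η_1,…,η_k are positive real numbers with η_1 + η_2 + … + η_k < 1, form a basis for the weak*-topology on M(X). -/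
open MeasureTheory Topology Filter Set
open scoped ENNReal NNReal

open Metric

/-!
Each set `{μ | ∀ i, η i < μ (U i)}` is open by the portmanteau theorem. Conversely, on a separable
metric space the weak topology is that of the Lévy–Prokhorov metric, and between probability
measures the one-sided bound `μ B ≤ ν (B^δ) + δ` for all `B` already controls that distance.
Cover `X` by finitely many balls of radius `< δ/2` with `μ`-null frontiers; the open atoms of the
Boolean algebra they generate are pairwise disjoint, have diameter `< δ` and carry all the mass
of `μ`. If `(1 - t) μ A < ν A` on every atom `A` of positive mass, summing over the atoms that
meet `B` gives `μ B ≤ ν (B^δ) + t`, and the weights `η A = (1 - t) μ A` automatically sum to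
`1 - t < 1`.
-/

section OpenAtom

variable {X : Type*} [TopologicalSpace X]

/-- The atom of the Boolean algebra generated by `T` inside exactly the members of `σ`, shrunk to
be open by avoiding the closures of the other members; the atoms miss only frontier points. -/
def openAtom (T σ : Finset (Set X)) : Set X :=
  (⋂ V ∈ σ, V) ∩ ⋂ V ∈ T \ σ, (closure V)ᶜ

variable {T σ σ' : Finset (Set X)}

theorem isOpen_openAtom (hσ : ∀ V ∈ σ, IsOpen V) : IsOpen (openAtom T σ) :=
  (isOpen_biInter_finset hσ).inter (isOpen_biInter_finset fun _ _ ↦ isClosed_closure.isOpen_compl)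

theorem openAtom_subset {V : Set X} (hV : V ∈ σ) : openAtom T σ ⊆ V :=
  inter_subset_left.trans (biInter_subset_of_mem hV)

theorem disjoint_openAtom_of_mem_of_notMem {V : Set X} (hV : V ∈ T) (hVσ : V ∈ σ)
    (hVσ' : V ∉ σ') :
    Disjoint (openAtom T σ) (openAtom T σ') := by
  refine Set.disjoint_left.mpr fun x hx hx' ↦ ?_
  have hx'V : x ∉ closure V := mem_iInter₂.mp hx'.2 V (Finset.mem_sdiff.mpr ⟨hV, hVσ'⟩)
  exact hx'V (subset_closure (openAtom_subset hVσ hx))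

theorem disjoint_openAtom (hσ : σ ⊆ T) (hσ' : σ' ⊆ T) (hne : σ ≠ σ') :
    Disjoint (openAtom T σ) (openAtom T σ') := by
  by_cases h : σ ⊆ σ'
  · obtain ⟨V, hVσ', hVσ⟩ := Finset.not_subset.mp fun h' ↦ hne (h.antisymm h')
    exact (disjoint_openAtom_of_mem_of_notMem (hσ' hVσ') hVσ' hVσ).symm
  · obtain ⟨V, hVσ, hVσ'⟩ := Finset.not_subset.mp h
    exact disjoint_openAtom_of_mem_of_notMem (hσ hVσ) hVσ hVσ'

theorem exists_mem_openAtom_or_mem_frontier (hT : ∀ V ∈ T, IsOpen V) {x : X}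
    (hx : x ∈ ⋃₀ (T : Set (Set X))) :
    (∃ σ ⊆ T, σ.Nonempty ∧ x ∈ openAtom T σ) ∨ ∃ V ∈ T, x ∈ frontier V := by
  classical
  refine or_iff_not_imp_right.mpr fun hfr ↦ ⟨T.filter (x ∈ ·), Finset.filter_subset _ _, ?_, ?_⟩
  · obtain ⟨V, hV, hxV⟩ := hx
    exact ⟨V, Finset.mem_filter.mpr ⟨hV, hxV⟩⟩
  · refine ⟨mem_iInter₂.mpr fun V hV ↦ (Finset.mem_filter.mp hV).2, mem_iInter₂.mpr fun V hV ↦ ?_⟩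
    obtain ⟨hVT, hxV⟩ := Finset.mem_sdiff.mp hV
    refine fun hxc ↦ hfr ⟨V, hVT, ?_⟩
    rw [(hT V hVT).frontier_eq]
    exact ⟨hxc, fun h ↦ hxV (Finset.mem_filter.mpr ⟨hVT, h⟩)⟩

end OpenAtom

namespace MeasureTheory

theorem measure_compl_sUnion_filter_pos {X : Type*} [MeasurableSpace X]
    {μ : Measure X} {S : Finset (Set X)} (hS : μ (⋃₀ ↑S)ᶜ = 0) :
    μ (⋃₀ ↑(S.filter (0 < μ ·)))ᶜ = 0 := by
  refine measure_mono_null (t := (⋃₀ ↑S)ᶜ ∪ ⋃ A ∈ S.filter (μ · = 0), A) ?_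
    (measure_union_null hS ((measure_biUnion_null_iff (Finset.countable_toSet _)).mpr
      fun A hA ↦ (Finset.mem_filter.mp hA).2))
  intro x hx
  by_cases hxS : x ∈ ⋃₀ (S : Set (Set X))
  · obtain ⟨A, hA, hxA⟩ := hxS
    refine Or.inr (mem_biUnion (Finset.mem_filter.mpr ⟨hA, ?_⟩) hxA)
    by_contra hpos
    exact hx ⟨A, Finset.mem_filter.mpr ⟨hA, pos_iff_ne_zero.mpr hpos⟩, hxA⟩
  · exact Or.inl hxS

theorem exists_finset_isOpen_pairwiseDisjoint_ae_cover {X : Type*}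
    [PseudoMetricSpace X] [CompactSpace X] [MeasurableSpace X] [OpensMeasurableSpace X]
    (μ : Measure X) [SFinite μ] {δ : ℝ} (hδ : 0 < δ) :
    ∃ S : Finset (Set X), (S : Set (Set X)).PairwiseDisjoint id ∧
      (∀ A ∈ S, IsOpen A ∧ 0 < μ A ∧ ∀ x ∈ A, ∀ y ∈ A, dist x y < δ) ∧ μ (⋃₀ ↑S)ᶜ = 0 := by
  classical
  choose r hr hfr using fun x : X ↦ exists_null_frontier_thickening μ {x} (half_pos hδ)
  simp only [thickening_singleton] at hfr
  obtain ⟨t, ht⟩ := isCompact_univ.elim_finite_subcover (fun x ↦ ball x (r x))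
    (fun _ ↦ isOpen_ball) fun x _ ↦ mem_iUnion.mpr ⟨x, mem_ball_self (hr x).1⟩
  set T := t.image fun x ↦ ball x (r x)
  have hTopen : ∀ V ∈ T, IsOpen V := by
    simp only [T, Finset.forall_mem_image]; exact fun _ _ ↦ isOpen_ball
  have hTcover : ⋃₀ (T : Set (Set X)) = univ := by
    refine eq_univ_of_forall fun x ↦ ?_
    obtain ⟨c, hc, hxc⟩ := mem_iUnion₂.mp (ht (mem_univ x))
    exact ⟨_, Finset.mem_image_of_mem _ hc, hxc⟩
  set S := (T.powerset.filter Finset.Nonempty).image (openAtom T)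
  have hS {A : Set X} : A ∈ S ↔ ∃ σ ⊆ T, σ.Nonempty ∧ openAtom T σ = A := by
    simp [S, and_assoc]
  refine ⟨S.filter (0 < μ ·), ?_, fun A hA ↦ ?_, measure_compl_sUnion_filter_pos ?_⟩
  · refine PairwiseDisjoint.subset ?_ (Finset.coe_subset.mpr (Finset.filter_subset _ S))
    rintro A hA A' hA' hne
    obtain ⟨σ, hσ, -, rfl⟩ := hS.mp hA
    obtain ⟨σ', hσ', -, rfl⟩ := hS.mp hA'
    exact disjoint_openAtom hσ hσ' fun h ↦ hne (h ▸ rfl)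
  · obtain ⟨hAS, hpos⟩ := Finset.mem_filter.mp hA
    obtain ⟨σ, hσ, ⟨V, hV⟩, rfl⟩ := hS.mp hAS
    obtain ⟨c, -, rfl⟩ := Finset.mem_image.mp (hσ hV)
    refine ⟨isOpen_openAtom fun W hW ↦ hTopen W (hσ hW), hpos, fun x hx y hy ↦ ?_⟩
    have hx' := mem_ball.mp (openAtom_subset hV hx)
    have hy' := mem_ball.mp (openAtom_subset hV hy)
    linarith [dist_triangle_right x y c, (hr c).2]
  · refine measure_mono_null (t := ⋃ V ∈ T, frontier V) (fun x hx ↦ ?_)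
      ((measure_biUnion_null_iff (Finset.countable_toSet _)).mpr ?_)
    · rcases exists_mem_openAtom_or_mem_frontier hTopen (hTcover ▸ mem_univ x) with
        ⟨σ, hσ, hne, hxσ⟩ | ⟨V, hV, hxV⟩
      · exact absurd ⟨_, hS.mpr ⟨σ, hσ, hne, rfl⟩, hxσ⟩ hx
      · exact mem_biUnion hV hxV
    · simp only [T, Finset.coe_image, mem_image, Finset.mem_coe, forall_exists_index, and_imp,
        forall_apply_eq_imp_iff₂]
      exact fun c _ ↦ hfr c

theorem measure_le_measure_thickening_add {X : Type*} [PseudoMetricSpace X] [MeasurableSpace X]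
    {μ ν : Measure X} {S : Finset (Set X)} {δ : ℝ} {t : ℝ≥0∞}
    (hdisj : (S : Set (Set X)).PairwiseDisjoint id) (hmeas : ∀ A ∈ S, MeasurableSet A)
    (hsmall : ∀ A ∈ S, ∀ x ∈ A, ∀ y ∈ A, dist x y < δ) (hnull : μ (⋃₀ ↑S)ᶜ = 0)
    (hν : ∀ A ∈ S, (1 - t) * μ A ≤ ν A) (B : Set X) :
    μ B ≤ ν (thickening δ B) + t * μ univ := by
  classical
  set S' := S.filter fun A ↦ (B ∩ A).Nonempty
  have hS' : S' ⊆ S := Finset.filter_subset _ _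
  have hdisj' : (S' : Set (Set X)).PairwiseDisjoint id := hdisj.subset (by simpa using hS')
  have hmeas' : ∀ A ∈ S', MeasurableSet A := fun A hA ↦ hmeas A (hS' hA)
  have hcover : B ⊆ (⋃ A ∈ S', A) ∪ (⋃₀ ↑S)ᶜ := by
    intro x hxB
    by_cases hx : x ∈ ⋃₀ (S : Set (Set X))
    · obtain ⟨A, hA, hxA⟩ := hx
      exact Or.inl (mem_biUnion (Finset.mem_filter.mpr ⟨hA, x, hxB, hxA⟩) hxA)
    · exact Or.inr hx
  have hthick : (⋃ A ∈ S', A) ⊆ thickening δ B := by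
    refine iUnion₂_subset fun A hA ↦ ?_
    obtain ⟨hAS, y, hyB, hyA⟩ := Finset.mem_filter.mp hA
    exact fun x hxA ↦ mem_thickening_iff.mpr ⟨y, hyB, hsmall A hAS x hxA y hyA⟩
  have hsum (ρ : Measure X) : ρ (⋃ A ∈ S', A) = ∑ A ∈ S', ρ A :=
    measure_biUnion_finset (f := id) hdisj' hmeas'
  calc μ B ≤ μ (⋃ A ∈ S', A) + μ (⋃₀ ↑S)ᶜ := (measure_mono hcover).trans (measure_union_le _ _)
    _ = ∑ A ∈ S', μ A := by rw [hnull, add_zero, hsum]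
    _ ≤ ∑ A ∈ S', ((1 - t) * μ A + t * μ A) := Finset.sum_le_sum fun A _ ↦ by
          rw [← add_mul]; exact le_mul_of_one_le_left zero_le le_tsub_add
    _ ≤ ∑ A ∈ S', (ν A + t * μ A) := Finset.sum_le_sum fun A hA ↦ by gcongr; exact hν A (hS' hA)
    _ = ν (⋃ A ∈ S', A) + t * μ (⋃ A ∈ S', A) := by
          rw [Finset.sum_add_distrib, ← Finset.mul_sum, hsum, hsum]
    _ ≤ ν (thickening δ B) + t * μ univ := by gcongr; exact subset_univ _

namespace ProbabilityMeasure

theorem isOpen_setOf_lt_apply {X : Type*} [TopologicalSpace X]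
    [MeasurableSpace X] [OpensMeasurableSpace X] [HasOuterApproxClosed X]
    {U : Set X} (hU : IsOpen U) (r : ℝ≥0) :
    IsOpen {ν : ProbabilityMeasure X | r < ν U} := by
  refine isOpen_iff_mem_nhds.mpr fun μ hμ ↦ ?_
  have hr : (r : ℝ≥0∞) < (μ : Measure X) U := by
    rw [← ennreal_coeFn_eq_coeFn_toMeasure]
    exact_mod_cast hμ
  filter_upwards [eventually_lt_of_lt_liminf <| hr.trans_le <|
    le_liminf_measure_open_of_tendsto tendsto_id hU] with ν hν
  rw [id, ← ennreal_coeFn_eq_coeFn_toMeasure] at hν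
  exact_mod_cast hν

theorem sum_apply_le_one {X ι : Type*} [MeasurableSpace X]
    (μ : ProbabilityMeasure X) {s : Finset ι} {f : ι → Set X}
    (hdisj : (s : Set ι).PairwiseDisjoint f) (hmeas : ∀ i ∈ s, MeasurableSet (f i)) :
    ∑ i ∈ s, μ (f i) ≤ 1 := by
  rw [← ENNReal.coe_le_coe]
  push_cast
  simp only [ennreal_coeFn_eq_coeFn_toMeasure]
  rw [← measure_biUnion_finset hdisj hmeas]
  exact prob_le_one

theorem exists_levyProkhorovDist_lt_subset {X : Type*} [PseudoMetricSpace X]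
    [TopologicalSpace.SeparableSpace X] [MeasurableSpace X] [OpensMeasurableSpace X]
    {μ : ProbabilityMeasure X} {V : Set (ProbabilityMeasure X)} (hV : V ∈ 𝓝 μ) :
    ∃ ε > 0, ∀ ν : ProbabilityMeasure X, levyProkhorovDist (μ : Measure X) ν < ε → ν ∈ V := by
  have hV' := (LevyProkhorov.probabilityMeasureHomeomorph (Ω := X)).symm.continuous.continuousAt
    (x := LevyProkhorov.ofMeasure μ) hV
  obtain ⟨ε, hε, hball⟩ := Metric.mem_nhds_iff.mp hV'
  exact ⟨ε, hε, fun ν hν ↦ hball (mem_ball'.mpr hν)⟩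

theorem levyProkhorovDist_le_of_forall_lt_apply {X : Type*} [PseudoMetricSpace X]
    [MeasurableSpace X] [OpensMeasurableSpace X] {μ ν : ProbabilityMeasure X} {S : Finset (Set X)}
    {δ : ℝ} {t : ℝ≥0} (htδ : (t : ℝ) ≤ δ)
    (hdisj : (S : Set (Set X)).PairwiseDisjoint id) (hmeas : ∀ A ∈ S, MeasurableSet A)
    (hsmall : ∀ A ∈ S, ∀ x ∈ A, ∀ y ∈ A, dist x y < δ) (hnull : (μ : Measure X) (⋃₀ ↑S)ᶜ = 0)
    (hν : ∀ A ∈ S, (1 - t) * μ A < ν A) :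
    levyProkhorovDist (μ : Measure X) ν ≤ δ := by
  refine levyProkhorovDist_le_of_forall_le _ _ (t.coe_nonneg.trans htδ) fun ε B hε _ ↦ ?_
  have hν' : ∀ A ∈ S, (1 - (t : ℝ≥0∞)) * (μ : Measure X) A ≤ (ν : Measure X) A := fun A hA ↦ by
    simp only [← ennreal_coeFn_eq_coeFn_toMeasure]
    exact_mod_cast (hν A hA).le
  calc (μ : Measure X) B ≤ (ν : Measure X) (thickening δ B) + t * (μ : Measure X) univ :=
        measure_le_measure_thickening_add hdisj hmeas hsmall hnull hν' B
    _ ≤ (ν : Measure X) (thickening ε B) + ENNReal.ofReal ε := by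
        rw [measure_univ, mul_one]
        gcongr
        rw [← ENNReal.ofReal_coe_nnreal]; exact ENNReal.ofReal_le_ofReal (htδ.trans hε.le)

theorem exists_fin_indexed_eq_setOf_forall_lt_apply {X : Type*}
    [MeasurableSpace X] [TopologicalSpace X] {S : Finset (Set X)} (η : Set X → ℝ≥0)
    (hS : S.Nonempty) (hdisj : (S : Set (Set X)).PairwiseDisjoint id)
    (hopen : ∀ A ∈ S, IsOpen A) (hne : ∀ A ∈ S, A.Nonempty) (hη : ∀ A ∈ S, 0 < η A)
    (hsum : ∑ A ∈ S, η A < 1) :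
    ∃ (k : ℕ) (U : Fin k → Set X) (η' : Fin k → ℝ≥0),
      1 ≤ k ∧ (∀ i, IsOpen (U i)) ∧ (∀ i, (U i).Nonempty) ∧
      (Pairwise fun i j => Disjoint (U i) (U j)) ∧
      (∀ i, 0 < η' i) ∧ (∑ i, η' i) < 1 ∧
      {ν : ProbabilityMeasure X | ∀ A ∈ S, η A < ν A} = {ν | ∀ i, η' i < ν (U i)} := by
  set e := S.equivFin.symm
  refine ⟨S.card, fun i ↦ e i, fun i ↦ η (e i), hS.card_pos, fun i ↦ hopen _ (e i).2,
    fun i ↦ hne _ (e i).2, fun i j hij ↦ hdisj (e i).2 (e j).2 ?_, fun i ↦ hη _ (e i).2, ?_, ?_⟩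
  · exact fun h ↦ hij (e.injective (Subtype.ext h))
  · rwa [e.sum_comp (fun A ↦ η A), S.sum_coe_sort η]
  · ext ν
    exact ((e.forall_congr_right (q := fun A : S ↦ η A < ν A)).trans Subtype.forall).symm

end ProbabilityMeasure

end MeasureTheory

theorem stmt18 {X : Type*} [MetricSpace X] [CompactSpace X]
    [MeasurableSpace X] [BorelSpace X] :
    TopologicalSpace.IsTopologicalBasis
      {W : Set (ProbabilityMeasure X) |
        ∃ (k : ℕ) (U : Fin k → Set X) (η : Fin k → ℝ≥0),
          1 ≤ k ∧ (∀ i, IsOpen (U i)) ∧ (∀ i, (U i).Nonempty) ∧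
          (Pairwise fun i j => Disjoint (U i) (U j)) ∧
          (∀ i, 0 < η i) ∧ (∑ i, η i) < 1 ∧
          W = {μ : ProbabilityMeasure X | ∀ i, η i < μ (U i)}} := by
  refine TopologicalSpace.isTopologicalBasis_of_isOpen_of_nhds ?_ fun μ V hμV hV ↦ ?_
  · rintro _ ⟨k, U, η, -, hU, -, -, -, -, rfl⟩
    simp only [ofPred_forall]
    exact isOpen_iInter_of_finite fun i ↦ ProbabilityMeasure.isOpen_setOf_lt_apply (hU i) (η i)
  obtain ⟨ε, hε, hεV⟩ := ProbabilityMeasure.exists_levyProkhorovDist_lt_subset (hV.mem_nhds hμV)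
  obtain ⟨S, hdisj, hS, hnull⟩ :=
    exists_finset_isOpen_pairwiseDisjoint_ae_cover (μ : Measure X) (half_pos hε)
  obtain ⟨t, ht0, ht⟩ : ∃ t : ℝ≥0, 0 < t ∧ t < min 1 (ε / 2).toNNReal :=
    exists_between (lt_min one_pos (Real.toNNReal_pos.mpr (half_pos hε)))
  rw [lt_min_iff, Real.lt_toNNReal_iff_coe_lt] at ht
  have hpos : ∀ A ∈ S, 0 < μ A := fun A hA ↦ by
    simpa [← ProbabilityMeasure.ennreal_coeFn_eq_coeFn_toMeasure] using (hS A hA).2.1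
  have hSne : S.Nonempty := Finset.nonempty_iff_ne_empty.mpr fun h ↦ by simp [h] at hnull
  refine ⟨_, ProbabilityMeasure.exists_fin_indexed_eq_setOf_forall_lt_apply (fun A ↦ (1 - t) * μ A)
    hSne hdisj (fun A hA ↦ (hS A hA).1) (fun A hA ↦ nonempty_of_measure_ne_zero (hS A hA).2.1.ne')
    (fun A hA ↦ mul_pos (tsub_pos_of_lt ht.1) (hpos A hA)) ?_,
    fun A hA ↦ mul_lt_of_lt_one_left (hpos A hA) (tsub_lt_self one_pos ht0), fun ν hν ↦ hεV ν ?_⟩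
  · calc ∑ A ∈ S, (1 - t) * μ A = (1 - t) * ∑ A ∈ S, μ A := Finset.mul_sum _ _ _ |>.symm
      _ ≤ 1 - t := mul_le_of_le_one_right zero_le
          (μ.sum_apply_le_one (f := id) hdisj fun A hA ↦ (hS A hA).1.measurableSet)
      _ < 1 := tsub_lt_self one_pos ht0
  · exact (ProbabilityMeasure.levyProkhorovDist_le_of_forall_lt_apply ht.2.le hdisj
      (fun A hA ↦ (hS A hA).1.measurableSet) (fun A hA ↦ (hS A hA).2.2) hnull hν).trans_lt
      (half_lt_self hε)
end

section
/- Let G be a countably infinite discrete amenable group and let φ be a nonnegative real-valued function on the collection F(G) of nonempty finite subsets of G satisfying (1) φ(Fs) = φ(F) for all F ∈ F(G) and s ∈ G, and (2) φ(F) ≤ (1/k)∑_{E∈𝓔} φ(E) for every k ∈ ℕ, every F ∈ F(G) and every finite collection 𝓔 ⊆ F(G) with ⋃_{E∈𝓔} E ⊆ F and ∑_{E∈𝓔} 1_E ≥ k·1_F. Then φ(F)/|F| converges, as F becomes more and more invariant, to inf_F φ(F)/|F| where F ranges over all nonempty finite subsets of G; that is, setting L = inf_{F∈F(G)} φ(F)/|F|,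 for every ε > 0 there exist a nonempty finite set K ⊆ G and δ > 0 such that |φ(F)/|F| − L| < ε for every nonempty finite F ⊆ G that is (K,δ)-invariant. -/
open MeasureTheory Topology Filter Set
open scoped ENNReal NNReal
open scoped Pointwise

set_option maxHeartbeats 1000000 in
theorem stmt19 {G : Type*} [Group G] [Countable G] [Infinite G] [DecidableEq G]
    (hG : ∃ F : ℕ → Finset G, IsFolnerSeq F)
    (φ : Finset G → ℝ) (hnonneg : ∀ F : Finset G, F.Nonempty → 0 ≤ φ F)
    (hinv : ∀ (F : Finset G), F.Nonempty → ∀ s : G, φ (F.image (· * s)) = φ F)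
    (hsub : ∀ k : ℕ, 0 < k → ∀ F : Finset G, F.Nonempty →
      ∀ E : Multiset (Finset G), (∀ A ∈ E, A.Nonempty) → (∀ A ∈ E, A ⊆ F) →
        (∀ x ∈ F, k ≤ (E.map (fun A => if x ∈ A then (1 : ℕ) else 0)).sum) →
        φ F ≤ (1 / (k : ℝ)) * (E.map φ).sum) :
    ∀ ε : ℝ, 0 < ε → ∃ (K : Finset G) (δ : ℝ), K.Nonempty ∧ 0 < δ ∧
      ∀ F : Finset G, F.Nonempty →
        (1 - δ) * (F.card : ℝ) ≤ ((F.filter fun s => ∀ g ∈ K, g * s ∈ F).card : ℝ) →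
        |φ F / (F.card : ℝ) -
          sInf {r : ℝ | ∃ F' : Finset G, F'.Nonempty ∧ r = φ F' / (F'.card : ℝ)}| < ε := by
  intro ε hε
  set S : Set ℝ := {r : ℝ | ∃ F' : Finset G, F'.Nonempty ∧ r = φ F' / (F'.card : ℝ)} with hS
  have hSne : S.Nonempty := ⟨φ {1} / ({1} : Finset G).card, by rw [hS]; exact ⟨{1}, Finset.singleton_nonempty 1, rfl⟩⟩
  have hSbd : BddBelow S := by
    refine ⟨0, fun r hr => ?_⟩
    rw [hS] at hr
    obtain ⟨F', hF', rfl⟩ := hr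
    exact div_nonneg (hnonneg F' hF') (Nat.cast_nonneg _)
  set L := sInf S with hL
  clear_value S L
  have hLlt : L < L + ε / 2 := by linarith
  obtain ⟨r, hrS, hrlt⟩ := exists_lt_of_csInf_lt hSne (hL ▸ hLlt)
  rw [hS] at hrS
  obtain ⟨F₀, hF₀ne, hr⟩ := hrS
  rw [← hL] at hrlt
  set k := F₀.card with hkdef
  clear_value k
  have hk : 0 < k := hkdef ▸ Finset.card_pos.mpr hF₀ne
  have hkR : (0:ℝ) < (k:ℝ) := by exact_mod_cast hk
  set c := φ {1} with hc
  have hc0 : 0 ≤ c := hnonneg _ (Finset.singleton_nonempty 1)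
  have hsing : ∀ x : G, φ {x} = c := by
    intro x
    have := hinv {1} (Finset.singleton_nonempty 1) x
    simpa using this
  set M : ℝ := (k : ℝ) * (1 + k) with hM
  have hM0 : 0 ≤ M := by positivity
  set δ : ℝ := ε / (2 * (M * c + 1)) with hδ
  clear_value c M δ
  have hδ0 : 0 < δ := by
    rw [hδ]
    apply div_pos hε
    nlinarith [mul_nonneg hM0 hc0]
  set F₀inv : Finset G := F₀.image (·⁻¹) with hF₀inv
  set K : Finset G := F₀ ∪ F₀inv with hK
  clear_value F₀inv
  refine ⟨K, δ, hF₀ne.mono (hK ▸ Finset.subset_union_left), hδ0, ?_⟩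
  clear_value K
  intro F hF hFinv
  set I : Finset G := F.filter (fun s => ∀ g ∈ K, g * s ∈ F) with hI
  have hIF : I ⊆ F := Finset.filter_subset _ _
  have hImem : ∀ s ∈ I, ∀ g ∈ K, g * s ∈ F := fun s hs => (Finset.mem_filter.mp hs).2
  have htileF : ∀ s ∈ I, F₀.image (· * s) ⊆ F := by
    intro s hs y hy
    obtain ⟨g, hg, rfl⟩ := Finset.mem_image.mp hy
    exact hImem s hs g (by rw [hK]; exact Finset.mem_union_left _ hg)
  set Good : Finset G := F.filter (fun x => ∀ g ∈ F₀, g⁻¹ * x ∈ I) with hGood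
  set Bad : Finset G := F \ Good with hBad
  clear_value I Good Bad
  set E₁ : Multiset (Finset G) := I.val.map (fun s => F₀.image (· * s)) with hE₁
  set E₂ : Multiset (Finset G) := Bad.val.bind (fun y => Multiset.replicate k ({y} : Finset G)) with hE₂
  set E : Multiset (Finset G) := E₁ + E₂ with hE
  clear_value E₁ E₂ E
  have hmemE : ∀ A ∈ E, (∃ s ∈ I, A = F₀.image (· * s)) ∨ (∃ y ∈ Bad, A = {y}) := by
    intro A hA
    rw [hE] at hA
    rcases Multiset.mem_add.mp hA with h | h
    · rw [hE₁] at h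
      obtain ⟨s, hs, rfl⟩ := Multiset.mem_map.mp h
      exact Or.inl ⟨s, hs, rfl⟩
    · rw [hE₂] at h
      obtain ⟨y, hy, hA⟩ := Multiset.mem_bind.mp h
      exact Or.inr ⟨y, hy, Multiset.eq_of_mem_replicate hA⟩
  have hEne : ∀ A ∈ E, A.Nonempty := by
    intro A hA
    rcases hmemE A hA with ⟨s, _, rfl⟩ | ⟨y, _, rfl⟩
    · exact hF₀ne.image _
    · exact Finset.singleton_nonempty y
  have hEsub : ∀ A ∈ E, A ⊆ F := by
    intro A hA
    rcases hmemE A hA with ⟨s, hs, rfl⟩ | ⟨y, hy, rfl⟩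
    · exact htileF s hs
    · rw [hBad] at hy
      exact Finset.singleton_subset_iff.mpr (Finset.mem_sdiff.mp hy).1
  have hcover : ∀ x ∈ F, k ≤ (E.map (fun A => if x ∈ A then (1 : ℕ) else 0)).sum := by
    intro x hx
    rw [hE, Multiset.map_add, Multiset.sum_add]
    by_cases hxg : x ∈ Good
    · refine le_trans ?_ (Nat.le_add_right _ _)
      rw [hE₁, Multiset.map_map]
      have hrw : (Multiset.map ((fun A => if x ∈ A then (1:ℕ) else 0) ∘ fun s => F₀.image (· * s)) I.val).sum
          = (I.filter (fun s => x ∈ F₀.image (· * s))).card := by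
        rw [Finset.card_filter]
        rfl
      rw [hrw]
      have hinj : Function.Injective (fun g : G => g⁻¹ * x) := by
        intro a b h
        simp only at h
        exact inv_injective (mul_right_cancel h)
      have himg : F₀.image (fun g => g⁻¹ * x) ⊆ I.filter (fun s => x ∈ F₀.image (· * s)) := by
        intro s hs
        obtain ⟨g, hg, rfl⟩ := Finset.mem_image.mp hs
        refine Finset.mem_filter.mpr ⟨?_, ?_⟩
        · rw [hGood, Finset.mem_filter] at hxg
          exact hxg.2 g hg
        · exact Finset.mem_image.mpr ⟨g, hg, by group⟩
      calc k = (F₀.image (fun g => g⁻¹ * x)).card := by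
                rw [Finset.card_image_of_injective _ hinj, hkdef]
        _ ≤ _ := Finset.card_le_card himg
    · refine le_trans ?_ (Nat.le_add_left _ _)
      have hxB : x ∈ Bad := by
        rw [hBad, Finset.mem_sdiff]; exact ⟨hx, hxg⟩
      rw [hE₂, Multiset.map_bind, Multiset.sum_bind]
      have hrw : (Multiset.map (fun y => ((Multiset.replicate k ({y} : Finset G)).map
            (fun A => if x ∈ A then (1:ℕ) else 0)).sum) Bad.val).sum
          = ∑ y ∈ Bad, k * (if x ∈ ({y} : Finset G) then (1:ℕ) else 0) := by
        rw [Finset.sum]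
        congr 1
        apply Multiset.map_congr rfl
        intro y _
        rw [Multiset.map_replicate, Multiset.sum_replicate, smul_eq_mul]
      rw [hrw]
      have : k * (if x ∈ ({x} : Finset G) then (1:ℕ) else 0) ≤
          ∑ y ∈ Bad, k * (if x ∈ ({y} : Finset G) then (1:ℕ) else 0) :=
        Finset.single_le_sum (f := fun y => k * (if x ∈ ({y} : Finset G) then (1:ℕ) else 0))
          (fun y _ => Nat.zero_le _) hxB
      simpa using this
  have hφsum : ((E.map φ)).sum = (I.card : ℝ) * φ F₀ + (Bad.card : ℝ) * ((k:ℝ) * c) := by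
    rw [hE, Multiset.map_add, Multiset.sum_add]
    congr 1
    · rw [hE₁, Multiset.map_map]
      have hrw : Multiset.map (φ ∘ fun s => F₀.image (· * s)) I.val
          = Multiset.map (fun _ => φ F₀) I.val :=
        Multiset.map_congr rfl (fun s _ => hinv F₀ hF₀ne s)
      rw [hrw, Multiset.map_const', Multiset.sum_replicate, Finset.card_def]
      simp [nsmul_eq_mul, mul_comm]
    · rw [hE₂, Multiset.map_bind, Multiset.sum_bind]
      have hrw : Multiset.map (fun y => ((Multiset.replicate k ({y} : Finset G)).map φ).sum) Bad.val
          = Multiset.map (fun _ => (k:ℝ) * c) Bad.val := by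
        apply Multiset.map_congr rfl
        intro y _
        rw [Multiset.map_replicate, Multiset.sum_replicate, hsing y, nsmul_eq_mul]
      rw [hrw, Multiset.map_const', Multiset.sum_replicate, Finset.card_def]
      simp [nsmul_eq_mul]
  have hkey := hsub k hk F hF E hEne hEsub hcover
  rw [hφsum] at hkey
  -- card bounds
  have hBadcard : (Bad.card : ℝ) ≤ M * δ * F.card := by
    have hBadsub : Bad ⊆ F₀ * ((F₀inv * F) \ I) := by
      intro x hxB
      rw [hBad, Finset.mem_sdiff] at hxB
      obtain ⟨hxF, hxG⟩ := hxB
      rw [hGood, Finset.mem_filter] at hxG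
      push_neg at hxG
      obtain ⟨g, hg, hgI⟩ := hxG hxF
      have h1 : g⁻¹ * x ∈ (F₀inv * F) \ I := by
        refine Finset.mem_sdiff.mpr ⟨Finset.mul_mem_mul ?_ hxF, hgI⟩
        rw [hF₀inv]
        exact Finset.mem_image_of_mem _ hg
      have h2 := Finset.mul_mem_mul hg h1
      rwa [mul_inv_cancel_left] at h2
    have hWsub : (F₀inv * F) \ I ⊆ ((F₀inv * F) \ F) ∪ (F \ I) := by
      intro w hw
      rw [Finset.mem_sdiff] at hw
      by_cases hwF : w ∈ F
      · exact Finset.mem_union_right _ (Finset.mem_sdiff.mpr ⟨hwF, hw.2⟩)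
      · exact Finset.mem_union_left _ (Finset.mem_sdiff.mpr ⟨hw.1, hwF⟩)
    have hsub2 : (F₀inv * F) \ F ⊆ F₀inv * (F \ I) := by
      intro w hw
      rw [Finset.mem_sdiff] at hw
      obtain ⟨a, ha, y, hy, rfl⟩ := Finset.mem_mul.mp hw.1
      have hyI : y ∉ I := by
        intro hyI
        exact hw.2 (hImem y hyI a (by rw [hK]; exact Finset.mem_union_right _ ha))
      exact Finset.mul_mem_mul ha (Finset.mem_sdiff.mpr ⟨hy, hyI⟩)
    have hFinvcard : F₀inv.card = k := by
      rw [hF₀inv, Finset.card_image_of_injective _ inv_injective, hkdef]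
    have hnat : Bad.card ≤ k * (k * (F \ I).card + (F \ I).card) := by
      calc Bad.card ≤ (F₀ * ((F₀inv * F) \ I)).card := Finset.card_le_card hBadsub
        _ ≤ F₀.card * ((F₀inv * F) \ I).card := Finset.card_mul_le
        _ ≤ k * (((F₀inv * F) \ F) ∪ (F \ I)).card := by
            rw [hkdef]
            exact Nat.mul_le_mul_left _ (Finset.card_le_card hWsub)
        _ ≤ k * (((F₀inv * F) \ F).card + (F \ I).card) :=
            Nat.mul_le_mul_left _ (Finset.card_union_le _ _)
        _ ≤ k * ((F₀inv * (F \ I)).card + (F \ I).card) := by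
            exact Nat.mul_le_mul_left _ (Nat.add_le_add_right (Finset.card_le_card hsub2) _)
        _ ≤ k * (k * (F \ I).card + (F \ I).card) := by
            refine Nat.mul_le_mul_left _ (Nat.add_le_add_right ?_ _)
            calc (F₀inv * (F \ I)).card ≤ F₀inv.card * (F \ I).card := Finset.card_mul_le
              _ = k * (F \ I).card := by rw [hFinvcard]
    have hsd : ((F \ I).card : ℝ) = (F.card : ℝ) - (I.card : ℝ) := by
      rw [Finset.card_sdiff_of_subset hIF]
      exact Nat.cast_sub (Finset.card_le_card hIF)
    have hsd2 : ((F \ I).card : ℝ) ≤ δ * F.card := by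
      rw [hsd]; linarith
    have hR : (Bad.card : ℝ) ≤ (k:ℝ) * ((k:ℝ) * ((F \ I).card:ℝ) + ((F \ I).card:ℝ)) := by
      exact_mod_cast hnat
    rw [hM]
    have hkk : (0:ℝ) ≤ (k:ℝ) * (1 + (k:ℝ)) := by positivity
    nlinarith [mul_le_mul_of_nonneg_left hsd2 hkk]
  -- final arithmetic
  have hn : (0:ℝ) < (F.card : ℝ) := by exact_mod_cast Finset.card_pos.mpr hF
  have hiF : (I.card : ℝ) ≤ (F.card : ℝ) := by exact_mod_cast Finset.card_le_card hIF
  have hφ0 : 0 ≤ φ F₀ := hnonneg _ hF₀ne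
  have hrk : r = φ F₀ / (k : ℝ) := hr
  have hk' : (k:ℝ) ≠ 0 := ne_of_gt hkR
  have h1 : φ F ≤ r * F.card + M * δ * c * F.card := by
    have heq : (1 / (k:ℝ)) * ((I.card : ℝ) * φ F₀ + (Bad.card : ℝ) * ((k:ℝ) * c))
        = (I.card : ℝ) * (φ F₀ / k) + (Bad.card : ℝ) * c := by
      field_simp
    rw [heq] at hkey
    have h2 : (I.card : ℝ) * (φ F₀ / k) ≤ (F.card : ℝ) * r := by
      rw [hrk]
      apply mul_le_mul_of_nonneg_right hiF (div_nonneg hφ0 (le_of_lt hkR))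
    have h3 : (Bad.card : ℝ) * c ≤ M * δ * (F.card:ℝ) * c :=
      mul_le_mul_of_nonneg_right hBadcard hc0
    linarith
  have hLle : L ≤ φ F / F.card := by
    rw [hL]
    exact csInf_le hSbd (by rw [hS]; exact ⟨F, hF, rfl⟩)
  have hup : φ F / F.card < L + ε := by
    rw [div_lt_iff₀ hn]
    have hδb : M * δ * c < ε / 2 := by
      have heq : M * δ * c = ε * (M * c) / (2 * (M * c + 1)) := by rw [hδ]; ring
      rw [heq, div_lt_iff₀ (by nlinarith [mul_nonneg hM0 hc0] : (0:ℝ) < 2 * (M * c + 1))]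
      nlinarith [mul_nonneg hM0 hc0, mul_pos hε (lt_of_lt_of_le one_pos (by nlinarith [mul_nonneg hM0 hc0] : (1:ℝ) ≤ M * c + 1))]
    have h4 : r * F.card < (L + ε / 2) * F.card := by
      exact mul_lt_mul_of_pos_right hrlt hn
    have h5 : M * δ * c * F.card < (ε / 2) * F.card := by
      exact mul_lt_mul_of_pos_right hδb hn
    linarith
  rw [abs_sub_lt_iff]
  constructor <;> linarith
end
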